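/- arXiv:2109.13663 — 7 statements merged into one kernel-verified Lean document; each statement's English description precedes it below -/
import Mathlib

section
/- Let N ≥ 3 and let λ be a smooth totally antisymmetric tensor field on ℝ^N (λ_{ijk}(z) for i,j,k ∈ {1,…,N}, changing sign under transposition of any two indices). If λ satisfies at every point z ∈ ℝ^N both the algebraic condition λ_{nij}λ_{mkp} + λ_{njk}λ_{mip} + λ_{nki}λ_{mjp} + λ_{mij}λ_{nkp} + λ_{mjk}λ_{nip} + λ_{mki}λ_{njp} = 0 for all indices i,j,k,m,n,p, and the differential condition Σ_i λ_{ijk} ∂λ_{mnp}/∂z_i = Σ_i (λ_{inp} ∂λ_{mjk}/∂z_i + λ_{ipm} ∂λ_{njk}/∂z_i + λ_{imn} ∂λ_{pjk}/∂z_i) for all indices j,k,m,n,p, then the tri-linear bracket {A,B,C}(z) = Σ_{i,j,k} λ_{ijk}(z) (∂A/∂z_i)(∂B/∂z_j)(∂C/∂z_k) satisfies the fundamental identity {{A,B,C},D,E} = {{A,D,E},B,C} + {A,{B,D,E},C} + {A,B,{C,D,E}} for all smooth functions A,B,C,D,E : ℝ^N → ℝ. -/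
/-- Partial derivative of `f` at `z` in the `i`-th coordinate direction of `ℝ^N`. -/
noncomputable def pd {N : ℕ} (f : (Fin N → ℝ) → ℝ) (i : Fin N) (z : Fin N → ℝ) : ℝ :=
  fderiv ℝ f z (Pi.single i 1)

/-- Tri-linear bracket `{A,B,C}(z) = Σ_{i,j,k} λ_{ijk}(z) ∂_i A ∂_j B ∂_k C` associated to
the tensor field `lam`. -/
noncomputable def nambu {N : ℕ} (lam : Fin N → Fin N → Fin N → (Fin N → ℝ) → ℝ)
    (A B C : (Fin N → ℝ) → ℝ) (z : Fin N → ℝ) : ℝ :=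
  ∑ i : Fin N, ∑ j : Fin N, ∑ k : Fin N,
    lam i j k z * pd A i z * pd B j z * pd C k z

/-- Total antisymmetry of a tensor field: it changes sign under transposition of any two
of its three indices. -/
def TotallyAntisym {N : ℕ} (lam : Fin N → Fin N → Fin N → (Fin N → ℝ) → ℝ) : Prop :=
  ∀ (i j k : Fin N) (z : Fin N → ℝ),
    lam i j k z = - lam j i k z ∧ lam i j k z = - lam i k j z ∧ lam i j k z = - lam k j i z

/-- The pointwise algebraic condition on the Nambu tensor coming from the fundamental
identity. -/
def AlgCond {N : ℕ} (lam : Fin N → Fin N → Fin N → (Fin N → ℝ) → ℝ) : Prop :=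
  ∀ (z : Fin N → ℝ) (i j k m n p : Fin N),
    lam n i j z * lam m k p z + lam n j k z * lam m i p z + lam n k i z * lam m j p z
      + lam m i j z * lam n k p z + lam m j k z * lam n i p z + lam m k i z * lam n j p z = 0

/-- The differential condition on the Nambu tensor coming from the fundamental identity. -/
def DiffCond {N : ℕ} (lam : Fin N → Fin N → Fin N → (Fin N → ℝ) → ℝ) : Prop :=
  ∀ (z : Fin N → ℝ) (j k m n p : Fin N),
    ∑ i : Fin N, lam i j k z * pd (lam m n p) i z
      = ∑ i : Fin N, (lam i n p z * pd (lam m j k) i z + lam i p m z * pd (lam n j k) i z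
          + lam i m n z * pd (lam p j k) i z)

/-- The fundamental identity for the tri-linear bracket associated to `lam`, required for
all smooth observables. -/
def FundId {N : ℕ} (lam : Fin N → Fin N → Fin N → (Fin N → ℝ) → ℝ) : Prop :=
  ∀ A B C D E : (Fin N → ℝ) → ℝ,
    ContDiff ℝ (⊤ : ℕ∞) A → ContDiff ℝ (⊤ : ℕ∞) B → ContDiff ℝ (⊤ : ℕ∞) C → ContDiff ℝ (⊤ : ℕ∞) D → ContDiff ℝ (⊤ : ℕ∞) E →
    ∀ z : Fin N → ℝ,
      nambu lam (nambu lam A B C) D E z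
        = nambu lam (nambu lam A D E) B C z + nambu lam A (nambu lam B D E) C z
          + nambu lam A B (nambu lam C D E) z

lemma contDiff_pd {N : ℕ} {f : (Fin N → ℝ) → ℝ} (hf : ContDiff ℝ (⊤ : ℕ∞) f) (i : Fin N) :
    ContDiff ℝ (⊤ : ℕ∞) (pd f i) := by
  have h1 : ContDiff ℝ (⊤ : ℕ∞) (fderiv ℝ f) := hf.fderiv_right (by simp)
  exact h1.clm_apply contDiff_const

lemma pd_mul {N : ℕ} {f g : (Fin N → ℝ) → ℝ} {z : Fin N → ℝ}
    (hf : DifferentiableAt ℝ f z) (hg : DifferentiableAt ℝ g z) (m : Fin N) :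
    pd (fun y => f y * g y) m z = pd f m z * g z + f z * pd g m z := by
  unfold pd; rw [fderiv_fun_mul hf hg]; simp; ring

lemma pd_sum {N : ℕ} {ι : Type*} (s : Finset ι) (f : ι → (Fin N → ℝ) → ℝ) {z : Fin N → ℝ}
    (hf : ∀ i ∈ s, DifferentiableAt ℝ (f i) z) (m : Fin N) :
    pd (fun y => ∑ i ∈ s, f i y) m z = ∑ i ∈ s, pd (f i) m z := by
  unfold pd; rw [fderiv_fun_sum hf]; simp

lemma pd_nambu {N : ℕ} {lam : Fin N → Fin N → Fin N → (Fin N → ℝ) → ℝ}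
    (hlam : ∀ i j k, ContDiff ℝ (⊤ : ℕ∞) (lam i j k))
    {A B C : (Fin N → ℝ) → ℝ}
    (hA : ContDiff ℝ (⊤ : ℕ∞) A) (hB : ContDiff ℝ (⊤ : ℕ∞) B) (hC : ContDiff ℝ (⊤ : ℕ∞) C)
    (m : Fin N) (z : Fin N → ℝ) :
    pd (nambu lam A B C) m z
      = ∑ i : Fin N, ∑ j : Fin N, ∑ k : Fin N,
          (pd (lam i j k) m z * pd A i z * pd B j z * pd C k z
            + lam i j k z * (pd (pd A i) m z * pd B j z * pd C k z
              + pd A i z * pd (pd B j) m z * pd C k z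
              + pd A i z * pd B j z * pd (pd C k) m z)) := by
  have dL : ∀ i j k (y : Fin N → ℝ), DifferentiableAt ℝ (lam i j k) y := fun i j k y =>
    (hlam i j k).differentiable (by simp) y
  have dA : ∀ i (y : Fin N → ℝ), DifferentiableAt ℝ (pd A i) y := fun i y =>
    (contDiff_pd hA i).differentiable (by simp) y
  have dB : ∀ j (y : Fin N → ℝ), DifferentiableAt ℝ (pd B j) y := fun j y =>
    (contDiff_pd hB j).differentiable (by simp) y
  have dC : ∀ k (y : Fin N → ℝ), DifferentiableAt ℝ (pd C k) y := fun k y =>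
    (contDiff_pd hC k).differentiable (by simp) y
  have dterm : ∀ i j k (y : Fin N → ℝ),
      DifferentiableAt ℝ (fun y => lam i j k y * pd A i y * pd B j y * pd C k y) y :=
    fun i j k y => (((dL i j k y).mul (dA i y)).mul (dB j y)).mul (dC k y)
  have h1 : pd (nambu lam A B C) m z
      = ∑ i : Fin N, pd (fun y => ∑ j : Fin N, ∑ k : Fin N,
          lam i j k y * pd A i y * pd B j y * pd C k y) m z := by
    rw [show nambu lam A B C = fun y => ∑ i : Fin N, ∑ j : Fin N, ∑ k : Fin N,
      lam i j k y * pd A i y * pd B j y * pd C k y from rfl]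
    exact pd_sum _ _ (fun i _ => DifferentiableAt.fun_sum fun j _ =>
      DifferentiableAt.fun_sum fun k _ => dterm i j k z) m
  rw [h1]
  refine Finset.sum_congr rfl fun i _ => ?_
  rw [pd_sum _ _ (fun j _ => DifferentiableAt.fun_sum fun k _ => dterm i j k z) m]
  refine Finset.sum_congr rfl fun j _ => ?_
  rw [pd_sum _ _ (fun k _ => dterm i j k z) m]
  refine Finset.sum_congr rfl fun k _ => ?_
  rw [show (fun y => lam i j k y * pd A i y * pd B j y * pd C k y)
      = fun y => (fun y => lam i j k y * pd A i y * pd B j y) y * pd C k y from rfl,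
    pd_mul (((dL i j k z).fun_mul (dA i z)).fun_mul (dB j z)) (dC k z),
    show (fun y => lam i j k y * pd A i y * pd B j y)
      = fun y => (fun y => lam i j k y * pd A i y) y * pd B j y from rfl,
    pd_mul ((dL i j k z).fun_mul (dA i z)) (dB j z),
    pd_mul (dL i j k z) (dA i z)]
  ring

lemma pd_eval {N : ℕ} {f : (Fin N → ℝ) → ℝ} (hf : ContDiff ℝ (⊤ : ℕ∞) f) (i m : Fin N)
    (z : Fin N → ℝ) :
    pd (pd f i) m z = fderiv ℝ (fderiv ℝ f) z (Pi.single m 1) (Pi.single i 1) := by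
  have hc : DifferentiableAt ℝ (fderiv ℝ f) z :=
    ((hf.fderiv_right (m := (⊤ : ℕ∞)) (by simp)).differentiable (by simp)) z
  have : pd f i = fun y => (fderiv ℝ f y) ((fun _ : (Fin N → ℝ) => (Pi.single i 1 : Fin N → ℝ)) y) := rfl
  rw [show pd (pd f i) m z = fderiv ℝ (fun y => (fderiv ℝ f y) (Pi.single i (1:ℝ))) z (Pi.single m 1) from rfl]
  rw [fderiv_clm_apply hc (differentiableAt_const _)]
  simp

lemma pd_symm {N : ℕ} {f : (Fin N → ℝ) → ℝ} (hf : ContDiff ℝ (⊤ : ℕ∞) f) (i m : Fin N)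
    (z : Fin N → ℝ) : pd (pd f i) m z = pd (pd f m) i z := by
  have hdf : ∀ y, HasFDerivAt f (fderiv ℝ f y) y := fun y =>
    (hf.differentiable (by simp) y).hasFDerivAt
  have hdf2 : HasFDerivAt (fderiv ℝ f) (fderiv ℝ (fderiv ℝ f) z) z :=
    (((hf.fderiv_right (m := (⊤ : ℕ∞)) (by simp)).differentiable (by simp)) z).hasFDerivAt
  rw [pd_eval hf, pd_eval hf]
  exact second_derivative_symmetric hdf hdf2 _ _


abbrev I6 (N : ℕ) := Fin N × Fin N × Fin N × Fin N × Fin N × Fin N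

def U6 {N : ℕ} (F : Fin N → Fin N → Fin N → Fin N → Fin N → Fin N → ℝ) : I6 N → ℝ :=
  fun x => F x.1 x.2.1 x.2.2.1 x.2.2.2.1 x.2.2.2.2.1 x.2.2.2.2.2

noncomputable def M6 {N : ℕ} (F : Fin N → Fin N → Fin N → Fin N → Fin N → Fin N → ℝ) : ℝ :=
  ∑ x : I6 N, U6 F x

lemma M6_nested {N : ℕ} (F : Fin N → Fin N → Fin N → Fin N → Fin N → Fin N → ℝ) :
    M6 F = ∑ m : Fin N, ∑ n : Fin N, ∑ p : Fin N, ∑ i : Fin N, ∑ j : Fin N, ∑ k : Fin N,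
      F m n p i j k := by
  simp only [M6, U6, Fintype.sum_prod_type]

lemma sum_inv_zero {ι : Type*} [Fintype ι] (H : ι → ℝ) (e : ι ≃ ι)
    (h : ∀ x, H (e x) = - H x) : ∑ x : ι, H x = 0 := by
  have h1 := Equiv.sum_comp e H
  have h2 : ∑ x : ι, H (e x) = ∑ x : ι, - H x := Finset.sum_congr rfl fun x _ => h x
  rw [Finset.sum_neg_distrib] at h2
  linarith

lemma M6_perm {N : ℕ} (F F' : Fin N → Fin N → Fin N → Fin N → Fin N → Fin N → ℝ)
    (e : I6 N ≃ I6 N) (h : ∀ x, U6 F (e x) = U6 F' x) : M6 F = M6 F' := by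
  simp only [M6]
  rw [← Equiv.sum_comp e (U6 F)]
  exact Finset.sum_congr rfl fun x _ => h x

lemma M6_eq_of {N : ℕ} (F F' : Fin N → Fin N → Fin N → Fin N → Fin N → Fin N → ℝ)
    (e : I6 N ≃ I6 N)
    (h : ∀ x, U6 F (e x) - U6 F' (e x) = -(U6 F x - U6 F' x)) : M6 F = M6 F' := by
  have h0 := sum_inv_zero (fun x => U6 F x - U6 F' x) e h
  have h2 : ∑ x : I6 N, (U6 F x - U6 F' x) = M6 F - M6 F' := by
    simp [M6, Finset.sum_sub_distrib]
  linarith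

lemma M6_add3_zero {N : ℕ} (F1 F2 F3 : Fin N → Fin N → Fin N → Fin N → Fin N → Fin N → ℝ)
    (e : I6 N ≃ I6 N)
    (h : ∀ x, U6 F1 (e x) + U6 F2 (e x) + U6 F3 (e x) = -(U6 F1 x + U6 F2 x + U6 F3 x)) :
    M6 F1 + M6 F2 + M6 F3 = 0 := by
  have h0 := sum_inv_zero (fun x => U6 F1 x + U6 F2 x + U6 F3 x) e h
  have h2 : ∑ x : I6 N, (U6 F1 x + U6 F2 x + U6 F3 x) = M6 F1 + M6 F2 + M6 F3 := by
    simp [M6, Finset.sum_add_distrib]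
  linarith
def eHalf {N : ℕ} : I6 N ≃ I6 N :=
  ⟨fun x => (x.2.2.2.1, x.2.2.2.2.1, x.2.2.2.2.2, x.1, x.2.1, x.2.2.1), fun x => (x.2.2.2.1, x.2.2.2.2.1, x.2.2.2.2.2, x.1, x.2.1, x.2.2.1), fun _ => rfl, fun _ => rfl⟩

def eST {N : ℕ} : I6 N ≃ I6 N :=
  ⟨fun x => (x.2.1, x.1, x.2.2.1, x.2.2.2.1, x.2.2.2.2.1, x.2.2.2.2.2), fun x => (x.2.1, x.1, x.2.2.1, x.2.2.2.1, x.2.2.2.2.1, x.2.2.2.2.2), fun _ => rfl, fun _ => rfl⟩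

def eD1 {N : ℕ} : I6 N ≃ I6 N :=
  ⟨fun x => (x.2.1, x.2.2.2.1, x.2.2.2.2.1, x.2.2.1, x.1, x.2.2.2.2.2), fun x => (x.2.2.2.2.1, x.1, x.2.2.2.1, x.2.1, x.2.2.1, x.2.2.2.2.2), fun _ => rfl, fun _ => rfl⟩

def eD2 {N : ℕ} : I6 N ≃ I6 N :=
  ⟨fun x => (x.2.2.1, x.2.1, x.2.2.2.2.1, x.2.2.2.1, x.1, x.2.2.2.2.2), fun x => (x.2.2.2.2.1, x.2.1, x.1, x.2.2.2.1, x.2.2.1, x.2.2.2.2.2), fun _ => rfl, fun _ => rfl⟩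

def eD3 {N : ℕ} : I6 N ≃ I6 N :=
  ⟨fun x => (x.2.2.1, x.2.2.2.1, x.2.1, x.2.2.2.2.1, x.1, x.2.2.2.2.2), fun x => (x.2.2.2.2.1, x.2.2.1, x.1, x.2.1, x.2.2.2.1, x.2.2.2.2.2), fun _ => rfl, fun _ => rfl⟩

def eE1 {N : ℕ} : I6 N ≃ I6 N :=
  ⟨fun x => (x.2.1, x.2.2.2.1, x.2.2.2.2.1, x.2.2.1, x.2.2.2.2.2, x.1), fun x => (x.2.2.2.2.2, x.1, x.2.2.2.1, x.2.1, x.2.2.1, x.2.2.2.2.1), fun _ => rfl, fun _ => rfl⟩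

def eE2 {N : ℕ} : I6 N ≃ I6 N :=
  ⟨fun x => (x.2.2.1, x.2.1, x.2.2.2.2.1, x.2.2.2.1, x.2.2.2.2.2, x.1), fun x => (x.2.2.2.2.2, x.2.1, x.1, x.2.2.2.1, x.2.2.1, x.2.2.2.2.1), fun _ => rfl, fun _ => rfl⟩

def eE3 {N : ℕ} : I6 N ≃ I6 N :=
  ⟨fun x => (x.2.2.1, x.2.2.2.1, x.2.1, x.2.2.2.2.1, x.2.2.2.2.2, x.1), fun x => (x.2.2.2.2.2, x.2.2.1, x.1, x.2.1, x.2.2.2.1, x.2.2.2.2.1), fun _ => rfl, fun _ => rfl⟩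

def eG0 {N : ℕ} : I6 N ≃ I6 N :=
  ⟨fun x => (x.2.2.2.2.2, x.2.2.2.1, x.2.2.2.2.1, x.1, x.2.1, x.2.2.1), fun x => (x.2.2.2.1, x.2.2.2.2.1, x.2.2.2.2.2, x.2.1, x.2.2.1, x.1), fun _ => rfl, fun _ => rfl⟩

def eG1 {N : ℕ} : I6 N ≃ I6 N :=
  ⟨fun x => (x.2.2.2.2.2, x.2.1, x.2.2.1, x.1, x.2.2.2.1, x.2.2.2.2.1), fun x => (x.2.2.2.1, x.2.1, x.2.2.1, x.2.2.2.2.1, x.2.2.2.2.2, x.1), fun _ => rfl, fun _ => rfl⟩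

def eG2 {N : ℕ} : I6 N ≃ I6 N :=
  ⟨fun x => (x.1, x.2.2.2.2.2, x.2.2.1, x.2.1, x.2.2.2.1, x.2.2.2.2.1), fun x => (x.1, x.2.2.2.1, x.2.2.1, x.2.2.2.2.1, x.2.2.2.2.2, x.2.1), fun _ => rfl, fun _ => rfl⟩

def eG3 {N : ℕ} : I6 N ≃ I6 N :=
  ⟨fun x => (x.1, x.2.1, x.2.2.2.2.2, x.2.2.1, x.2.2.2.1, x.2.2.2.2.1), fun x => (x.1, x.2.1, x.2.2.2.1, x.2.2.2.2.1, x.2.2.2.2.2, x.2.2.1), fun _ => rfl, fun _ => rfl⟩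


lemma key {N : ℕ} (L : Fin N → Fin N → Fin N → ℝ) (G : Fin N → Fin N → Fin N → Fin N → ℝ)
    (a b c d e : Fin N → ℝ) (Sa Sb Sc Sd Se : Fin N → Fin N → ℝ)
    (hSa : ∀ i m, Sa i m = Sa m i) (hSb : ∀ i m, Sb i m = Sb m i)
    (hSc : ∀ i m, Sc i m = Sc m i) (hSd : ∀ i m, Sd i m = Sd m i)
    (hSe : ∀ i m, Se i m = Se m i)
    (h12 : ∀ i j k, L i j k = - L j i k) (h23 : ∀ i j k, L i j k = - L i k j)
    (hAlg : ∀ i j k m n p, L n i j * L m k p + L n j k * L m i p + L n k i * L m j p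
      + L m i j * L n k p + L m j k * L n i p + L m k i * L n j p = 0)
    (hDiff : ∀ j k m n p, ∑ i : Fin N, L i j k * G m n p i
      = ∑ i : Fin N, (L i n p * G m j k i + L i p m * G n j k i + L i m n * G p j k i)) :
    (∑ m : Fin N, ∑ n : Fin N, ∑ p : Fin N, L m n p *
        (∑ i : Fin N, ∑ j : Fin N, ∑ k : Fin N,
          (G i j k m * a i * b j * c k
            + L i j k * (Sa i m * b j * c k + a i * Sb j m * c k + a i * b j * Sc k m)))
        * d n * e p)
    = (∑ m : Fin N, ∑ n : Fin N, ∑ p : Fin N, L m n p *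
        (∑ i : Fin N, ∑ j : Fin N, ∑ k : Fin N,
          (G i j k m * a i * d j * e k
            + L i j k * (Sa i m * d j * e k + a i * Sd j m * e k + a i * d j * Se k m)))
        * b n * c p)
    + (∑ i : Fin N, ∑ j : Fin N, ∑ k : Fin N, L i j k * a i *
        (∑ r : Fin N, ∑ s : Fin N, ∑ t : Fin N,
          (G r s t j * b r * d s * e t
            + L r s t * (Sb r j * d s * e t + b r * Sd s j * e t + b r * d s * Se t j)))
        * c k)
    + (∑ i : Fin N, ∑ j : Fin N, ∑ k : Fin N, L i j k * a i * b j *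
        (∑ r : Fin N, ∑ s : Fin N, ∑ t : Fin N,
          (G r s t k * c r * d s * e t
            + L r s t * (Sc r k * d s * e t + c r * Sd s k * e t + c r * d s * Se t k)))) := by
  have hcyc : ∀ i j k, L i j k = L j k i := by
    intro i j k; rw [h12 i j k, h23 j i k]; ring
  have hcyc2 : ∀ i j k, L i j k = L k i j := by
    intro i j k; rw [hcyc i j k, hcyc j k i]
  -- split the four big expressions into monomial pieces
  have hsplitL : (∑ m : Fin N, ∑ n : Fin N, ∑ p : Fin N, L m n p *
        (∑ i : Fin N, ∑ j : Fin N, ∑ k : Fin N,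
          (G i j k m * a i * b j * c k
            + L i j k * (Sa i m * b j * c k + a i * Sb j m * c k + a i * b j * Sc k m)))
        * d n * e p)
      = M6 (fun m n p i j k => L m n p * (G i j k m * a i * b j * c k) * d n * e p)
      + M6 (fun m n p i j k => L m n p * (L i j k * (Sa i m * b j * c k)) * d n * e p)
      + M6 (fun m n p i j k => L m n p * (L i j k * (a i * Sb j m * c k)) * d n * e p)
      + M6 (fun m n p i j k => L m n p * (L i j k * (a i * b j * Sc k m)) * d n * e p) := by
    simp only [M6, U6, Fintype.sum_prod_type, ← Finset.sum_add_distrib, Finset.mul_sum,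
      Finset.sum_mul]
    refine Finset.sum_congr rfl fun m _ => ?_
    refine Finset.sum_congr rfl fun n _ => ?_
    refine Finset.sum_congr rfl fun p _ => ?_
    refine Finset.sum_congr rfl fun i _ => ?_
    refine Finset.sum_congr rfl fun j _ => ?_
    refine Finset.sum_congr rfl fun k _ => ?_
    ring
  have hsplitR1 : (∑ m : Fin N, ∑ n : Fin N, ∑ p : Fin N, L m n p *
        (∑ i : Fin N, ∑ j : Fin N, ∑ k : Fin N,
          (G i j k m * a i * d j * e k
            + L i j k * (Sa i m * d j * e k + a i * Sd j m * e k + a i * d j * Se k m)))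
        * b n * c p)
      = M6 (fun m n p i j k => L m n p * (G i j k m * a i * d j * e k) * b n * c p)
      + M6 (fun m n p i j k => L m n p * (L i j k * (Sa i m * d j * e k)) * b n * c p)
      + M6 (fun m n p i j k => L m n p * (L i j k * (a i * Sd j m * e k)) * b n * c p)
      + M6 (fun m n p i j k => L m n p * (L i j k * (a i * d j * Se k m)) * b n * c p) := by
    simp only [M6, U6, Fintype.sum_prod_type, ← Finset.sum_add_distrib, Finset.mul_sum,
      Finset.sum_mul]
    refine Finset.sum_congr rfl fun m _ => ?_
    refine Finset.sum_congr rfl fun n _ => ?_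
    refine Finset.sum_congr rfl fun p _ => ?_
    refine Finset.sum_congr rfl fun i _ => ?_
    refine Finset.sum_congr rfl fun j _ => ?_
    refine Finset.sum_congr rfl fun k _ => ?_
    ring
  have hsplitR2 : (∑ i : Fin N, ∑ j : Fin N, ∑ k : Fin N, L i j k * a i *
        (∑ r : Fin N, ∑ s : Fin N, ∑ t : Fin N,
          (G r s t j * b r * d s * e t
            + L r s t * (Sb r j * d s * e t + b r * Sd s j * e t + b r * d s * Se t j)))
        * c k)
      = M6 (fun m n p i j k => L m n p * a m * (G i j k n * b i * d j * e k) * c p)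
      + M6 (fun m n p i j k => L m n p * a m * (L i j k * (Sb i n * d j * e k)) * c p)
      + M6 (fun m n p i j k => L m n p * a m * (L i j k * (b i * Sd j n * e k)) * c p)
      + M6 (fun m n p i j k => L m n p * a m * (L i j k * (b i * d j * Se k n)) * c p) := by
    simp only [M6, U6, Fintype.sum_prod_type, ← Finset.sum_add_distrib, Finset.mul_sum,
      Finset.sum_mul]
    refine Finset.sum_congr rfl fun m _ => ?_
    refine Finset.sum_congr rfl fun n _ => ?_
    refine Finset.sum_congr rfl fun p _ => ?_
    refine Finset.sum_congr rfl fun i _ => ?_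
    refine Finset.sum_congr rfl fun j _ => ?_
    refine Finset.sum_congr rfl fun k _ => ?_
    ring
  have hsplitR3 : (∑ i : Fin N, ∑ j : Fin N, ∑ k : Fin N, L i j k * a i * b j *
        (∑ r : Fin N, ∑ s : Fin N, ∑ t : Fin N,
          (G r s t k * c r * d s * e t
            + L r s t * (Sc r k * d s * e t + c r * Sd s k * e t + c r * d s * Se t k))))
      = M6 (fun m n p i j k => L m n p * a m * b n * (G i j k p * c i * d j * e k))
      + M6 (fun m n p i j k => L m n p * a m * b n * (L i j k * (Sc i p * d j * e k)))
      + M6 (fun m n p i j k => L m n p * a m * b n * (L i j k * (c i * Sd j p * e k)))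
      + M6 (fun m n p i j k => L m n p * a m * b n * (L i j k * (c i * d j * Se k p))) := by
    simp only [M6, U6, Fintype.sum_prod_type, ← Finset.sum_add_distrib, Finset.mul_sum,
      Finset.sum_mul]
    refine Finset.sum_congr rfl fun m _ => ?_
    refine Finset.sum_congr rfl fun n _ => ?_
    refine Finset.sum_congr rfl fun p _ => ?_
    refine Finset.sum_congr rfl fun i _ => ?_
    refine Finset.sum_congr rfl fun j _ => ?_
    refine Finset.sum_congr rfl fun k _ => ?_
    ring
  -- second-derivative groups that cancel by symmetry alone
  have hSagrp : M6 (fun m n p i j k => L m n p * (L i j k * (Sa i m * b j * c k)) * d n * e p)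
      = M6 (fun m n p i j k => L m n p * (L i j k * (Sa i m * d j * e k)) * b n * c p) := by
    refine M6_eq_of _ _ eHalf ?_
    rintro ⟨m, n, p, i, j, k⟩
    simp only [U6, eHalf, Equiv.coe_fn_mk]
    rw [hSa m i]; ring
  have hSbgrp : M6 (fun m n p i j k => L m n p * (L i j k * (a i * Sb j m * c k)) * d n * e p)
      = M6 (fun m n p i j k => L m n p * a m * (L i j k * (Sb i n * d j * e k)) * c p) := by
    refine M6_eq_of _ _ eHalf ?_
    rintro ⟨m, n, p, i, j, k⟩
    simp only [U6, eHalf, Equiv.coe_fn_mk]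
    rw [hSb n i, hSb m j]; ring
  have hScgrp : M6 (fun m n p i j k => L m n p * (L i j k * (a i * b j * Sc k m)) * d n * e p)
      = M6 (fun m n p i j k => L m n p * a m * b n * (L i j k * (Sc i p * d j * e k))) := by
    refine M6_eq_of _ _ eHalf ?_
    rintro ⟨m, n, p, i, j, k⟩
    simp only [U6, eHalf, Equiv.coe_fn_mk]
    rw [hSc p i, hSc m k]; ring
  -- the Sd group: cancels via the algebraic condition
  have hd1 : M6 (fun m n p i j k => L m n p * (L i j k * (a i * Sd j m * e k)) * b n * c p)
      = M6 (fun s t al be ga ep => Sd s t * (L t be ga * L al s ep)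
          * (a al * b be * c ga * e ep)) := by
    refine M6_perm _ _ eD1 ?_
    rintro ⟨s, t, al, be, ga, ep⟩
    simp only [U6, eD1, Equiv.coe_fn_mk]
    ring
  have hd2 : M6 (fun m n p i j k => L m n p * a m * (L i j k * (b i * Sd j n * e k)) * c p)
      = M6 (fun s t al be ga ep => Sd s t * (L al t ga * L be s ep)
          * (a al * b be * c ga * e ep)) := by
    refine M6_perm _ _ eD2 ?_
    rintro ⟨s, t, al, be, ga, ep⟩
    simp only [U6, eD2, Equiv.coe_fn_mk]
    ring
  have hd3 : M6 (fun m n p i j k => L m n p * a m * b n * (L i j k * (c i * Sd j p * e k)))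
      = M6 (fun s t al be ga ep => Sd s t * (L al be t * L ga s ep)
          * (a al * b be * c ga * e ep)) := by
    refine M6_perm _ _ eD3 ?_
    rintro ⟨s, t, al, be, ga, ep⟩
    simp only [U6, eD3, Equiv.coe_fn_mk]
    ring
  have hSdgrp : M6 (fun m n p i j k => L m n p * (L i j k * (a i * Sd j m * e k)) * b n * c p)
      + M6 (fun m n p i j k => L m n p * a m * (L i j k * (b i * Sd j n * e k)) * c p)
      + M6 (fun m n p i j k => L m n p * a m * b n * (L i j k * (c i * Sd j p * e k))) = 0 := by
    rw [hd1, hd2, hd3]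
    refine M6_add3_zero _ _ _ eST ?_
    rintro ⟨s, t, al, be, ga, ep⟩
    simp only [U6, eST, Equiv.coe_fn_mk]
    rw [hSd t s, hcyc al s ga, hcyc al t ga, hcyc2 al be s, hcyc2 al be t,
      h12 al t ep, h12 be t ep, h12 ga t ep, h12 al s ep, h12 be s ep, h12 ga s ep]
    linear_combination (-(Sd s t * (a al * b be * c ga * e ep))) * hAlg be ga al t s ep
  -- the Se group
  have he1 : M6 (fun m n p i j k => L m n p * (L i j k * (a i * d j * Se k m)) * b n * c p)
      = M6 (fun s t al be ga de => Se s t * (L t be ga * L al de s)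
          * (a al * b be * c ga * d de)) := by
    refine M6_perm _ _ eE1 ?_
    rintro ⟨s, t, al, be, ga, de⟩
    simp only [U6, eE1, Equiv.coe_fn_mk]
    ring
  have he2 : M6 (fun m n p i j k => L m n p * a m * (L i j k * (b i * d j * Se k n)) * c p)
      = M6 (fun s t al be ga de => Se s t * (L al t ga * L be de s)
          * (a al * b be * c ga * d de)) := by
    refine M6_perm _ _ eE2 ?_
    rintro ⟨s, t, al, be, ga, de⟩
    simp only [U6, eE2, Equiv.coe_fn_mk]
    ring
  have he3 : M6 (fun m n p i j k => L m n p * a m * b n * (L i j k * (c i * d j * Se k p)))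
      = M6 (fun s t al be ga de => Se s t * (L al be t * L ga de s)
          * (a al * b be * c ga * d de)) := by
    refine M6_perm _ _ eE3 ?_
    rintro ⟨s, t, al, be, ga, de⟩
    simp only [U6, eE3, Equiv.coe_fn_mk]
    ring
  have hSegrp : M6 (fun m n p i j k => L m n p * (L i j k * (a i * d j * Se k m)) * b n * c p)
      + M6 (fun m n p i j k => L m n p * a m * (L i j k * (b i * d j * Se k n)) * c p)
      + M6 (fun m n p i j k => L m n p * a m * b n * (L i j k * (c i * d j * Se k p))) = 0 := by
    rw [he1, he2, he3]
    refine M6_add3_zero _ _ _ eST ?_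
    rintro ⟨s, t, al, be, ga, de⟩
    simp only [U6, eST, Equiv.coe_fn_mk]
    rw [hSe t s, hcyc al s ga, hcyc al t ga, hcyc2 al be s, hcyc2 al be t,
      hcyc2 al de s, hcyc2 be de s, hcyc2 ga de s, hcyc2 al de t, hcyc2 be de t,
      hcyc2 ga de t]
    linear_combination (Se s t * (a al * b be * c ga * d de)) * hAlg be ga al t s de
  -- the first-derivative (G) group: uses the differential condition
  have hg0 : M6 (fun m n p i j k => L m n p * (G i j k m * a i * b j * c k) * d n * e p)
      = M6 (fun al be ga de ep mu => L mu de ep * G al be ga mu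
          * (a al * b be * c ga * d de * e ep)) := by
    refine M6_perm _ _ eG0 ?_
    rintro ⟨al, be, ga, de, ep, mu⟩
    simp only [U6, eG0, Equiv.coe_fn_mk]
    ring
  have hg1 : M6 (fun m n p i j k => L m n p * (G i j k m * a i * d j * e k) * b n * c p)
      = M6 (fun al be ga de ep mu => L mu be ga * G al de ep mu
          * (a al * b be * c ga * d de * e ep)) := by
    refine M6_perm _ _ eG1 ?_
    rintro ⟨al, be, ga, de, ep, mu⟩
    simp only [U6, eG1, Equiv.coe_fn_mk]
    ring
  have hg2 : M6 (fun m n p i j k => L m n p * a m * (G i j k n * b i * d j * e k) * c p)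
      = M6 (fun al be ga de ep mu => L mu ga al * G be de ep mu
          * (a al * b be * c ga * d de * e ep)) := by
    refine M6_perm _ _ eG2 ?_
    rintro ⟨al, be, ga, de, ep, mu⟩
    simp only [U6, eG2, Equiv.coe_fn_mk]
    rw [hcyc al mu ga]
    ring
  have hg3 : M6 (fun m n p i j k => L m n p * a m * b n * (G i j k p * c i * d j * e k))
      = M6 (fun al be ga de ep mu => L mu al be * G ga de ep mu
          * (a al * b be * c ga * d de * e ep)) := by
    refine M6_perm _ _ eG3 ?_
    rintro ⟨al, be, ga, de, ep, mu⟩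
    simp only [U6, eG3, Equiv.coe_fn_mk]
    rw [hcyc2 al be mu]
    ring
  have hGgrp : M6 (fun m n p i j k => L m n p * (G i j k m * a i * b j * c k) * d n * e p)
      = M6 (fun m n p i j k => L m n p * (G i j k m * a i * d j * e k) * b n * c p)
      + M6 (fun m n p i j k => L m n p * a m * (G i j k n * b i * d j * e k) * c p)
      + M6 (fun m n p i j k => L m n p * a m * b n * (G i j k p * c i * d j * e k)) := by
    rw [hg0, hg1, hg2, hg3, M6_nested, M6_nested, M6_nested, M6_nested]
    simp only [← Finset.sum_add_distrib]
    refine Finset.sum_congr rfl fun al _ => ?_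
    refine Finset.sum_congr rfl fun be _ => ?_
    refine Finset.sum_congr rfl fun ga _ => ?_
    refine Finset.sum_congr rfl fun de _ => ?_
    refine Finset.sum_congr rfl fun ep _ => ?_
    simp only [← add_mul, ← Finset.sum_mul]
    rw [hDiff de ep al be ga]
  linarith [hsplitL, hsplitR1, hsplitR2, hsplitR3, hSagrp, hSbgrp, hScgrp, hSdgrp, hSegrp,
    hGgrp]

/-- if a smooth totally antisymmetric tensor field on `ℝ^N` (`N ≥ 3`)
satisfies the algebraic and differential conditions, then its tri-linear bracket
satisfies the fundamental identity. -/
theorem statement0 (N : ℕ) (hN : 3 ≤ N)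
    (lam : Fin N → Fin N → Fin N → (Fin N → ℝ) → ℝ)
    (hsmooth : ∀ i j k, ContDiff ℝ (⊤ : ℕ∞) (lam i j k))
    (hanti : TotallyAntisym lam)
    (h1 : AlgCond lam) (h2 : DiffCond lam) :
    FundId lam := by
  intro A B C D E hA hB hC hD hE z
  simp only [nambu]
  simp only [pd_nambu hsmooth hA hB hC, pd_nambu hsmooth hA hD hE,
    pd_nambu hsmooth hB hD hE, pd_nambu hsmooth hC hD hE]
  exact key (fun i j k => lam i j k z) (fun i j k m => pd (lam i j k) m z)
    (fun i => pd A i z) (fun i => pd B i z) (fun i => pd C i z)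
    (fun i => pd D i z) (fun i => pd E i z)
    (fun i m => pd (pd A i) m z) (fun i m => pd (pd B i) m z)
    (fun i m => pd (pd C i) m z) (fun i m => pd (pd D i) m z)
    (fun i m => pd (pd E i) m z)
    (fun i m => pd_symm hA i m z) (fun i m => pd_symm hB i m z)
    (fun i m => pd_symm hC i m z) (fun i m => pd_symm hD i m z)
    (fun i m => pd_symm hE i m z)
    (fun i j k => (hanti i j k z).1) (fun i j k => (hanti i j k z).2.1)
    (fun i j k m n p => h1 z i j k m n p)
    (fun j k m n p => h2 z j k m n p)
end

section
/- Let N ≥ 3 and let λ be a smooth totally antisymmetric tensor field on ℝ^N. If the tri-linear bracket {A,B,C}(z) = Σ_{i,j,k} λ_{ijk}(z) (∂A/∂z_i)(∂B/∂z_j)(∂C/∂z_k) satisfies the fundamental identity {{A,B,C},D,E} = {{A,D,E},B,C} + {A,{B,D,E},C} + {A,B,{C,D,E}} for all smooth functions A,B,C,D,E : ℝ^N → ℝ, then at every point z ∈ ℝ^N the tensor satisfies λ_{nij}λ_{mkp} + λ_{njk}λ_{mip} + λ_{nki}λ_{mjp} + λ_{mij}λ_{nkp} + λ_{mjk}λ_{nip}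 + λ_{mki}λ_{njp} = 0 for all indices i,j,k,m,n,p. -/
/-! ### Auxiliary lemmas -/

lemma pd_of_hasFDerivAt {N : ℕ} {f : (Fin N → ℝ) → ℝ} {z : Fin N → ℝ}
    {L : (Fin N → ℝ) →L[ℝ] ℝ} (h : HasFDerivAt f L z) (a : Fin N) :
    pd f a z = L (Pi.single a 1) := by
  rw [pd, h.fderiv]

lemma coord_hasFDerivAt {N : ℕ} (q : Fin N) (x : Fin N → ℝ) :
    HasFDerivAt (fun y : Fin N → ℝ => y q)
      (ContinuousLinearMap.proj (R := ℝ) (φ := fun _ : Fin N => ℝ) q) x := by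
  exact (ContinuousLinearMap.proj (R := ℝ) (φ := fun _ : Fin N => ℝ) q).hasFDerivAt

lemma pd_coord {N : ℕ} (q a : Fin N) (x : Fin N → ℝ) :
    pd (fun y : Fin N → ℝ => y q) a x = (Pi.single a 1 : Fin N → ℝ) q := by
  rw [pd_of_hasFDerivAt (coord_hasFDerivAt q x)]
  rfl

lemma coord_contDiff {N : ℕ} (q : Fin N) :
    ContDiff ℝ (⊤ : ℕ∞) (fun y : Fin N → ℝ => y q) :=
  (ContinuousLinearMap.proj (R := ℝ) (φ := fun _ : Fin N => ℝ) q).contDiff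

section
variable {N : ℕ} (z0 : Fin N → ℝ) (m n : Fin N)

lemma D_hasFDerivAt (x : Fin N → ℝ) :
    HasFDerivAt (fun y : Fin N → ℝ => (y m - z0 m) * (y n - z0 n))
      ((x m - z0 m) • (ContinuousLinearMap.proj (R := ℝ) (φ := fun _ : Fin N => ℝ) n)
        + (x n - z0 n) • (ContinuousLinearMap.proj (R := ℝ) (φ := fun _ : Fin N => ℝ) m)) x := by
  exact ((coord_hasFDerivAt m x).sub_const (z0 m)).mul ((coord_hasFDerivAt n x).sub_const (z0 n))

lemma pd_D (b : Fin N) (x : Fin N → ℝ) :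
    pd (fun y : Fin N → ℝ => (y m - z0 m) * (y n - z0 n)) b x
      = (x m - z0 m) * (Pi.single b 1 : Fin N → ℝ) n
        + (x n - z0 n) * (Pi.single b 1 : Fin N → ℝ) m := by
  rw [pd_of_hasFDerivAt (D_hasFDerivAt z0 m n x)]
  simp [ContinuousLinearMap.proj_apply]

lemma D_contDiff :
    ContDiff ℝ (⊤ : ℕ∞) (fun y : Fin N → ℝ => (y m - z0 m) * (y n - z0 n)) :=
  ((coord_contDiff m).sub contDiff_const).mul ((coord_contDiff n).sub contDiff_const)

end

section
variable {N : ℕ} (lam : Fin N → Fin N → Fin N → (Fin N → ℝ) → ℝ)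
  (z0 : Fin N → ℝ) (m n q p : Fin N)

lemma inner_eq (x : Fin N → ℝ) :
    nambu lam (fun y => y q) (fun y => (y m - z0 m) * (y n - z0 n)) (fun y => y p) x
      = lam q n p x * (x m - z0 m) + lam q m p x * (x n - z0 n) := by
  unfold nambu
  simp only [pd_coord, pd_D, Pi.single_apply]
  simp [Finset.sum_ite_eq, Finset.mul_sum, mul_ite, ite_mul, mul_add, add_mul,
    Finset.sum_add_distrib]

end

lemma pd_inner {N : ℕ} (lam : Fin N → Fin N → Fin N → (Fin N → ℝ) → ℝ)
    (hsmooth : ∀ i j k, ContDiff ℝ (⊤ : ℕ∞) (lam i j k))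
    (z0 : Fin N → ℝ) (m n q p a : Fin N) :
    pd (nambu lam (fun y => y q) (fun y => (y m - z0 m) * (y n - z0 n)) (fun y => y p)) a z0
      = lam q n p z0 * (Pi.single a 1 : Fin N → ℝ) m
        + lam q m p z0 * (Pi.single a 1 : Fin N → ℝ) n := by
  have hfe : nambu lam (fun y => y q) (fun y => (y m - z0 m) * (y n - z0 n)) (fun y => y p)
      = fun x => lam q n p x * (x m - z0 m) + lam q m p x * (x n - z0 n) := by
    funext x; exact inner_eq lam z0 m n q p x
  rw [hfe]
  have h1 : HasFDerivAt (lam q n p) (fderiv ℝ (lam q n p) z0) z0 :=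
    (((hsmooth q n p).differentiable (by simp)) z0).hasFDerivAt
  have h2 : HasFDerivAt (lam q m p) (fderiv ℝ (lam q m p) z0) z0 :=
    (((hsmooth q m p).differentiable (by simp)) z0).hasFDerivAt
  have hD := (h1.mul ((coord_hasFDerivAt m z0).sub_const (z0 m))).add
    (h2.mul ((coord_hasFDerivAt n z0).sub_const (z0 n)))
  rw [pd_of_hasFDerivAt (f := fun x => lam q n p x * (x m - z0 m) + lam q m p x * (x n - z0 n)) hD]
  simp [ContinuousLinearMap.proj_apply]

section
variable {N : ℕ} (lam : Fin N → Fin N → Fin N → (Fin N → ℝ) → ℝ)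
  (F : (Fin N → ℝ) → ℝ) (z0 : Fin N → ℝ) (j k : Fin N)

lemma nambu_slot1 :
    nambu lam F (fun y => y j) (fun y => y k) z0
      = ∑ a : Fin N, lam a j k z0 * pd F a z0 := by
  unfold nambu
  simp only [pd_coord, Pi.single_apply]
  simp [Finset.sum_ite_eq, mul_ite, ite_mul, Finset.mul_sum]

lemma nambu_slot2 :
    nambu lam (fun y => y j) F (fun y => y k) z0
      = ∑ a : Fin N, lam j a k z0 * pd F a z0 := by
  unfold nambu
  simp only [pd_coord, Pi.single_apply]
  simp [Finset.sum_ite_eq, mul_ite, ite_mul, Finset.mul_sum]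

lemma nambu_slot3 :
    nambu lam (fun y => y j) (fun y => y k) F z0
      = ∑ a : Fin N, lam j k a z0 * pd F a z0 := by
  unfold nambu
  simp only [pd_coord, Pi.single_apply]
  simp [Finset.sum_ite_eq, mul_ite, ite_mul, Finset.mul_sum]

lemma nambu_D_zero (m n p : Fin N) :
    nambu lam F (fun y => (y m - z0 m) * (y n - z0 n)) (fun y => y p) z0 = 0 := by
  unfold nambu
  simp [pd_D]

end

/-- if the tri-linear bracket of a smooth totally antisymmetric tensor field
on `ℝ^N` (`N ≥ 3`) satisfies the fundamental identity, then the tensor satisfies the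
pointwise algebraic condition. -/
theorem statement1 (N : ℕ) (hN : 3 ≤ N)
    (lam : Fin N → Fin N → Fin N → (Fin N → ℝ) → ℝ)
    (hsmooth : ∀ i j k, ContDiff ℝ (⊤ : ℕ∞) (lam i j k))
    (hanti : TotallyAntisym lam)
    (hFI : FundId lam) :
    AlgCond lam := by
  intro z0 i j k m n p
  have FI := hFI (fun y => y i) (fun y => y j) (fun y => y k)
    (fun y => (y m - z0 m) * (y n - z0 n)) (fun y => y p)
    (coord_contDiff i) (coord_contDiff j) (coord_contDiff k)
    (D_contDiff z0 m n) (coord_contDiff p) z0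
  rw [nambu_D_zero, nambu_slot1, nambu_slot2, nambu_slot3] at FI
  simp only [pd_inner lam hsmooth z0 m n, Pi.single_apply] at FI
  simp only [mul_ite, mul_one, mul_zero, mul_add, Finset.sum_add_distrib,
    Finset.sum_ite_eq, Finset.mem_univ, if_true] at FI
  have E1 : lam m j k z0 * lam i n p z0 = -(lam m j k z0 * lam n i p z0) := by
    rw [(hanti i n p z0).1]; ring
  have E2 : lam n j k z0 * lam i m p z0 = -(lam n j k z0 * lam m i p z0) := by
    rw [(hanti i m p z0).1]; ring
  have e3 : lam i m k z0 = lam m k i z0 := by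
    have h1 := (hanti i m k z0).1
    have h2 := (hanti m i k z0).2.1
    linarith
  have E3 : lam i m k z0 * lam j n p z0 = -(lam m k i z0 * lam n j p z0) := by
    rw [e3, (hanti j n p z0).1]; ring
  have e4 : lam i n k z0 = lam n k i z0 := by
    have h1 := (hanti i n k z0).1
    have h2 := (hanti n i k z0).2.1
    linarith
  have E4 : lam i n k z0 * lam j m p z0 = -(lam n k i z0 * lam m j p z0) := by
    rw [e4, (hanti j m p z0).1]; ring
  have e5 : lam i j m z0 = lam m i j z0 := by
    have h1 := (hanti i j m z0).2.2
    have h2 := (hanti m j i z0).2.1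
    linarith
  have E5 : lam i j m z0 * lam k n p z0 = -(lam m i j z0 * lam n k p z0) := by
    rw [e5, (hanti k n p z0).1]; ring
  have e6 : lam i j n z0 = lam n i j z0 := by
    have h1 := (hanti i j n z0).2.2
    have h2 := (hanti n j i z0).2.1
    linarith
  have E6 : lam i j n z0 * lam k m p z0 = -(lam n i j z0 * lam m k p z0) := by
    rw [e6, (hanti k m p z0).1]; ring
  linarith [FI, E1, E2, E3, E4, E5, E6]
end

section
/- Let N ≥ 3 and let λ be a smooth totally antisymmetric tensor field on ℝ^N. If the tri-linear bracket {A,B,C}(z) = Σ_{i,j,k} λ_{ijk}(z) (∂A/∂z_i)(∂B/∂z_j)(∂C/∂z_k) satisfies the fundamental identity {{A,B,C},D,E} = {{A,D,E},B,C} + {A,{B,D,E},C} + {A,B,{C,D,E}} for all smooth functions A,B,C,D,E : ℝ^N → ℝ, then at every point z ∈ ℝ^N the tensor satisfies the differential condition Σ_i λ_{ijk} ∂λ_{mnp}/∂z_i = Σ_i (λ_{inp} ∂λ_{mjk}/∂z_i + λ_{ipm} ∂λ_{njk}/∂z_i + λ_{imn} ∂λ_{pjk}/∂z_i) for all indices j,k,m,n,p.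 -/
lemma pd_coord_s2 {N : ℕ} (a i : Fin N) (z : Fin N → ℝ) :
    pd (fun w => w a) i z = if a = i then 1 else 0 := by
  have h : (fun w : Fin N → ℝ => w a)
      = (ContinuousLinearMap.proj a : (Fin N → ℝ) →L[ℝ] ℝ) := rfl
  rw [pd, h, ContinuousLinearMap.fderiv]
  simp [Pi.single_apply]

lemma coord_smooth {N : ℕ} (a : Fin N) : ContDiff ℝ (⊤ : ℕ∞) (fun w : Fin N → ℝ => w a) :=
  (ContinuousLinearMap.proj a : (Fin N → ℝ) →L[ℝ] ℝ).contDiff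

lemma nambu_coord3 {N : ℕ} (lam : Fin N → Fin N → Fin N → (Fin N → ℝ) → ℝ)
    (a b c : Fin N) :
    nambu lam (fun w => w a) (fun w => w b) (fun w => w c) = lam a b c := by
  funext z
  simp [nambu, pd_coord_s2, mul_ite, mul_zero, mul_one, Finset.sum_ite_eq]

lemma nambu_left {N : ℕ} (lam : Fin N → Fin N → Fin N → (Fin N → ℝ) → ℝ)
    (A : (Fin N → ℝ) → ℝ) (d e : Fin N) (z : Fin N → ℝ) :
    nambu lam A (fun w => w d) (fun w => w e) z = ∑ i : Fin N, lam i d e z * pd A i z := by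
  simp [nambu, pd_coord_s2, mul_ite, mul_zero, mul_one, Finset.sum_ite_eq]

lemma nambu_mid {N : ℕ} (lam : Fin N → Fin N → Fin N → (Fin N → ℝ) → ℝ)
    (B : (Fin N → ℝ) → ℝ) (a c : Fin N) (z : Fin N → ℝ) :
    nambu lam (fun w => w a) B (fun w => w c) z = ∑ j : Fin N, lam a j c z * pd B j z := by
  simp [nambu, pd_coord_s2, mul_ite, mul_zero, mul_one, ite_mul, zero_mul, one_mul,
    Finset.sum_ite_eq, Finset.sum_ite_eq']

lemma nambu_right {N : ℕ} (lam : Fin N → Fin N → Fin N → (Fin N → ℝ) → ℝ)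
    (C : (Fin N → ℝ) → ℝ) (a b : Fin N) (z : Fin N → ℝ) :
    nambu lam (fun w => w a) (fun w => w b) C z = ∑ k : Fin N, lam a b k z * pd C k z := by
  simp [nambu, pd_coord_s2, mul_ite, mul_zero, mul_one, ite_mul, zero_mul, one_mul,
    Finset.sum_ite_eq, Finset.sum_ite_eq']

/-- if the tri-linear bracket of a smooth totally antisymmetric tensor field
on `ℝ^N` (`N ≥ 3`) satisfies the fundamental identity, then the tensor satisfies the
differential condition. -/
theorem statement2 (N : ℕ) (hN : 3 ≤ N)
    (lam : Fin N → Fin N → Fin N → (Fin N → ℝ) → ℝ)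
    (hsmooth : ∀ i j k, ContDiff ℝ (⊤ : ℕ∞) (lam i j k))
    (hanti : TotallyAntisym lam)
    (hFI : FundId lam) :
    DiffCond lam := by
  intro z j k m n p
  have h := hFI (fun w => w m) (fun w => w n) (fun w => w p) (fun w => w j) (fun w => w k)
    (coord_smooth m) (coord_smooth n) (coord_smooth p) (coord_smooth j) (coord_smooth k) z
  rw [nambu_coord3, nambu_coord3, nambu_coord3, nambu_coord3, nambu_left, nambu_left,
    nambu_mid, nambu_right] at h
  rw [h, ← Finset.sum_add_distrib, ← Finset.sum_add_distrib]
  refine Finset.sum_congr rfl fun i _ => ?_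
  have e1 : lam m i p z = lam i p m z := by
    have h1 := (hanti m i p z).1
    have h2 := (hanti i m p z).2.1
    linarith
  have e2 : lam m n i z = lam i m n z := by
    have h1 := (hanti m n i z).2.2
    have h2 := (hanti i n m z).2.1
    linarith
  rw [e1, e2]
end

section
/- Let M ≥ 2, K ≥ 0 and N = K + 2M. Let J̃ be the N×N real block matrix with blocks ((O_M, I_M, O_{M,K}), (−I_M, O_M, O_{M,K}), (O_{K,M}, O_{K,M}, O_K)), i.e., the canonical Lie–Darboux Poisson matrix with M canonical pairs and K Casimir directions. Then J̃ does NOT satisfy the relation J̃_{ij} J̃_{mk} + J̃_{jk} J̃_{mi} + J̃_{ki} J̃_{mj} = 0 for all indices i,j,k,m; in particular, taking i = 1, j = M+1, m = 2 in that relation would force J̃_{2,k} = 0 for all k, contradicting J̃_{2,M+2} = 1. -/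
/-- The canonical Lie–Darboux Poisson matrix on `ℝ^N`, `N = K + 2M`, with `M` canonical
pairs and `K` Casimir (zero) directions: block form
`((O_M, I_M, O_{M,K}), (−I_M, O_M, O_{M,K}), (O_{K,M}, O_{K,M}, O_K))`.
Indices `0,…,M-1` are the `q`'s, `M,…,2M-1` the `p`'s and the rest the Casimir
directions. -/
def JDarboux (M K : ℕ) : Matrix (Fin (K + 2 * M)) (Fin (K + 2 * M)) ℝ := fun i j =>
  if i.1 < M ∧ j.1 = i.1 + M then 1
  else if j.1 < M ∧ i.1 = j.1 + M then -1
  else 0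

namespace JDarboux

variable {M K : ℕ}

theorem apply_eq_one {i j : Fin (K + 2 * M)} (hi : i.1 < M) (hj : j.1 = i.1 + M) :
    JDarboux M K i j = 1 :=
  if_pos ⟨hi, hj⟩

theorem apply_eq_zero_of_lt_of_ne {i j : Fin (K + 2 * M)} (hi : i.1 < M) (hj : j.1 ≠ i.1 + M) :
    JDarboux M K i j = 0 := by
  rw [JDarboux, if_neg (by omega), if_neg (by omega)]

theorem row_eq_zero_of_plucker {a b p : Fin (K + 2 * M)} (ha : a.1 < M) (hb : b.1 < M)
    (hab : a.1 ≠ b.1) (hp : p.1 = a.1 + M)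
    (h : ∀ k, JDarboux M K a p * JDarboux M K b k + JDarboux M K p k * JDarboux M K b a
      + JDarboux M K k a * JDarboux M K b p = 0)
    (k : Fin (K + 2 * M)) : JDarboux M K b k = 0 := by
  have := h k
  rwa [apply_eq_one ha hp, apply_eq_zero_of_lt_of_ne hb (by omega : a.1 ≠ b.1 + M),
    apply_eq_zero_of_lt_of_ne hb (by omega : p.1 ≠ b.1 + M), one_mul, mul_zero, mul_zero,
    add_zero, add_zero] at this

end JDarboux

/-- for `M ≥ 2`, the canonical Lie–Darboux Poisson matrix with `M` canonical
pairs and `K` Casimir directions does NOT satisfy the Plücker-type relation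
`J̃_{ij}J̃_{mk} + J̃_{jk}J̃_{mi} + J̃_{ki}J̃_{mj} = 0` for all indices. -/
theorem statement9 (M K : ℕ) (hM : 2 ≤ M) :
    ¬ (∀ i j k m : Fin (K + 2 * M),
      JDarboux M K i j * JDarboux M K m k + JDarboux M K j k * JDarboux M K m i
        + JDarboux M K k i * JDarboux M K m j = 0) := by
  intro h
  let q₁ : Fin (K + 2 * M) := ⟨0, by omega⟩
  let q₂ : Fin (K + 2 * M) := ⟨1, by omega⟩
  let p₁ : Fin (K + 2 * M) := ⟨M, by omega⟩
  let p₂ : Fin (K + 2 * M) := ⟨1 + M, by omega⟩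
  have hq₂p₂ : JDarboux M K q₂ p₂ = 0 :=
    JDarboux.row_eq_zero_of_plucker (a := q₁) (p := p₁) (show 0 < M by omega)
      (show 1 < M by omega) zero_ne_one (zero_add M).symm (fun k => h q₁ p₁ k q₂) p₂
  rw [JDarboux.apply_eq_one (show 1 < M by omega) rfl] at hq₂p₂
  exact one_ne_zero hq₂p₂
end

section
/- Let N ≥ 3, K ≥ 0, M ≥ 1 with N = K + 2M, and let J̃ be the canonical Lie–Darboux Poisson matrix with M canonical pairs and K zero (Casimir) directions. Suppose there exists a totally antisymmetric real tensor λ_{ijk} (i,j,k ∈ {1,…,N}) satisfying the algebraic condition λ_{nij}λ_{mkp} + λ_{njk}λ_{mip} + λ_{nki}λ_{mjp} + λ_{mij}λ_{nkp} + λ_{mjk}λ_{nip} + λ_{mki}λ_{njp} = 0 for all indices, and such that λ_{ijN} = J̃_{ij} for all i,j. Then M = 1; equivalently, a tri-linear Nambu bracket generating this Poisson structure can exist only when N = K + 2. -/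
/-!
Fixing the last entry of a Nambu bracket, `J_{ij} = λ_{ijc}`, and putting `m = k = c` in the
algebraic condition leaves exactly the Plücker relation
`J_{ij} J_{kl} - J_{ik} J_{jl} + J_{il} J_{jk} = 0`, i.e. `J ∧ J = 0`, so `J` has rank at most two.
The Darboux matrix with two canonical pairs `(0, M)` and `(1, M + 1)` violates it.
-/

section NambuTensor

variable {ι R : Type*}

def IsTotallyAntisymm [Neg R] (lam : ι → ι → ι → R) : Prop :=
  ∀ i j k, lam i j k = -lam j i k ∧ lam i j k = -lam i k j ∧ lam i j k = -lam k j i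

def SatisfiesFundamentalIdentity [Mul R] [Add R] [Zero R] (lam : ι → ι → ι → R) : Prop :=
  ∀ i j k m n p, lam n i j * lam m k p + lam n j k * lam m i p + lam n k i * lam m j p
    + lam m i j * lam n k p + lam m j k * lam n i p + lam m k i * lam n j p = 0

namespace IsTotallyAntisymm

theorem rotate [InvolutiveNeg R] {lam : ι → ι → ι → R} (h : IsTotallyAntisymm lam) (a b c : ι) :
    lam a b c = lam b c a := by
  rw [(h a b c).1, (h b a c).2.1, neg_neg]

variable [NonAssocRing R] [NoZeroDivisors R] [CharZero R] {lam : ι → ι → ι → R}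

theorem apply_self_left (h : IsTotallyAntisymm lam) (a b : ι) : lam a a b = 0 :=
  CharZero.eq_neg_self_iff.mp (h a a b).1

theorem apply_self_outer (h : IsTotallyAntisymm lam) (a b : ι) : lam a b a = 0 :=
  CharZero.eq_neg_self_iff.mp (h a b a).2.2

end IsTotallyAntisymm

theorem SatisfiesFundamentalIdentity.plucker [CommRing R] [NoZeroDivisors R] [CharZero R]
    {lam : ι → ι → ι → R} (hfi : SatisfiesFundamentalIdentity lam)
    (hanti : IsTotallyAntisymm lam) (c a b d e : ι) :
    lam a b c * lam d e c - lam a d c * lam b e c + lam a e c * lam b d c = 0 := by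
  have h := hfi a b c c d e
  rw [hanti.apply_self_left, hanti.apply_self_left, hanti.apply_self_outer,
    hanti.rotate c a e, hanti.rotate c b e, hanti.rotate c a b, hanti.rotate d c a,
    hanti.rotate c a d, (hanti d c e).2.1, (hanti d b c).1] at h
  linear_combination -h

end NambuTensor

def darbouxEntry (M i j : ℕ) : ℝ :=
  if i < M ∧ j = i + M then 1 else if j < M ∧ i = j + M then -1 else 0

theorem darbouxEntry_not_plucker {M : ℕ} (hM : 2 ≤ M) :
    darbouxEntry M 0 M * darbouxEntry M 1 (M + 1) - darbouxEntry M 0 1 * darbouxEntry M M (M + 1)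
      + darbouxEntry M 0 (M + 1) * darbouxEntry M M 1 ≠ 0 := by
  have h0M : darbouxEntry M 0 M = 1 := if_pos (by omega)
  have h1M : darbouxEntry M 1 (M + 1) = 1 := if_pos (by omega)
  have h01 : darbouxEntry M 0 1 = 0 := by rw [darbouxEntry, if_neg (by omega), if_neg (by omega)]
  have h0M1 : darbouxEntry M 0 (M + 1) = 0 := by
    rw [darbouxEntry, if_neg (by omega), if_neg (by omega)]
  rw [h0M, h1M, h01, h0M1]
  norm_num

/-- let `N = K + 2M ≥ 3` with `M ≥ 1`, and let `J̃` be the canonical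
Lie–Darboux Poisson matrix with `M` canonical pairs and `K` Casimir directions. If there
is a totally antisymmetric real tensor `λ_{ijk}` satisfying the algebraic condition from
the fundamental identity and generating `J̃` through its last slot, `λ_{ijN} = J̃_{ij}`,
then `M = 1`, i.e. `N = K + 2`. -/
theorem statement10 (N M K : ℕ) (hM : 1 ≤ M) (hNK : N = K + 2 * M)
    (lam : Fin N → Fin N → Fin N → ℝ)
    (hanti : ∀ i j k : Fin N,
      lam i j k = - lam j i k ∧ lam i j k = - lam i k j ∧ lam i j k = - lam k j i)
    (halg : ∀ i j k m n p : Fin N,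
      lam n i j * lam m k p + lam n j k * lam m i p + lam n k i * lam m j p
        + lam m i j * lam n k p + lam m j k * lam n i p + lam m k i * lam n j p = 0)
    (hgen : ∀ i j : Fin N, lam i j ⟨N - 1, by omega⟩
      = (if i.1 < M ∧ j.1 = i.1 + M then (1 : ℝ)
          else if j.1 < M ∧ i.1 = j.1 + M then -1
          else 0)) :
    M = 1 := by
  by_contra hM1
  have hM2 : 2 ≤ M := by omega
  have hJ : ∀ i j : Fin N, lam i j ⟨N - 1, by omega⟩ = darbouxEntry M i j := hgen
  have hplucker := SatisfiesFundamentalIdentity.plucker halg hanti ⟨N - 1, by omega⟩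
    ⟨0, by omega⟩ ⟨M, by omega⟩ ⟨1, by omega⟩ ⟨M + 1, by omega⟩
  simp only [hJ] at hplucker
  exact darbouxEntry_not_plucker hM2 hplucker
end

section
/- Let κ ≥ 2 and let {·,·,…,·} be a (κ+2)-linear bracket on smooth functions on ℝ^N, given by a smooth totally antisymmetric tensor field of order κ+2 via {A,B,C_1,…,C_κ}(z) = Σ λ_{ij k_1⋯k_κ}(z) ∂_i A ∂_j B ∂_{k_1}C_1 ⋯ ∂_{k_κ}C_κ, which satisfies the generalized fundamental identity {{A,B,C_1,…,C_κ},D,E_1,…,E_κ} = {{A,D,E_1,…,E_κ},B,C_1,…,C_κ} + {A,{B,D,E_1,…,E_κ},C_1,…,C_κ} + Σ_{k=1}^κ {A,B,C_1,…,C_{k−1},{C_k,D,E_1,…,E_κ},C_{k+1},…,C_κ} for all smooth observables. Then for any fixed smooth functions C_2,…,C_κ, the tri-linear bracket defined by [A,B,C] := {A,B,C,C_2,…,C_κ} satisfies the tri-linear fundamental identity [[A,B,C],D,E] = [[A,D,E],B,C] + [A,[B,D,E],C] + [A,B,[C,D,E]] for all smooth A,B,C,D,E. -/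
/-- The `(κ+2)`-linear bracket `{A,B,C_1,…,C_κ}(z) = Σ λ_{i j k_1 ⋯ k_κ}(z)
∂_i A ∂_j B ∂_{k_1} C_1 ⋯ ∂_{k_κ} C_κ` associated to an order-`(κ+2)` tensor field
`lam` on `ℝ^N`. -/
noncomputable def nbr {N κ : ℕ} (lam : (Fin (κ + 2) → Fin N) → (Fin N → ℝ) → ℝ)
    (A B : (Fin N → ℝ) → ℝ) (C : Fin κ → (Fin N → ℝ) → ℝ) (z : Fin N → ℝ) : ℝ :=
  ∑ idx : Fin (κ + 2) → Fin N, lam idx z *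
    (pd A (idx 0) z * pd B (idx 1) z * ∏ a : Fin κ, pd (C a) (idx a.succ.succ) z)

/-- Total antisymmetry of an order-`(κ+2)` tensor field: it changes sign under
transposition of any two of its indices. -/
def MultiAntisym {N κ : ℕ} (lam : (Fin (κ + 2) → Fin N) → (Fin N → ℝ) → ℝ) : Prop :=
  ∀ (idx : Fin (κ + 2) → Fin N) (a b : Fin (κ + 2)), a ≠ b →
    ∀ z : Fin N → ℝ, lam (idx ∘ Equiv.swap a b) z = - lam idx z

/-- The generalized fundamental identity for the `(κ+2)`-linear bracket of `lam`,
required for all smooth observables. -/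
def GenFundId {N κ : ℕ} (lam : (Fin (κ + 2) → Fin N) → (Fin N → ℝ) → ℝ) : Prop :=
  ∀ (A B D : (Fin N → ℝ) → ℝ) (C E : Fin κ → (Fin N → ℝ) → ℝ),
    ContDiff ℝ (⊤ : ℕ∞) A → ContDiff ℝ (⊤ : ℕ∞) B → ContDiff ℝ (⊤ : ℕ∞) D →
    (∀ a, ContDiff ℝ (⊤ : ℕ∞) (C a)) → (∀ a, ContDiff ℝ (⊤ : ℕ∞) (E a)) →
    ∀ z : Fin N → ℝ,
      nbr lam (nbr lam A B C) D E z
        = nbr lam (nbr lam A D E) B C z + nbr lam A (nbr lam B D E) C z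
          + ∑ k : Fin κ, nbr lam A B (Function.update C k (nbr lam (C k) D E)) z

lemma pd_zero {N : ℕ} (i : Fin N) (z : Fin N → ℝ) : pd (fun _ => (0:ℝ)) i z = 0 := by
  simp [pd]

lemma nbr_zero_entry {N κ : ℕ} (lam : (Fin (κ + 2) → Fin N) → (Fin N → ℝ) → ℝ)
    (A B : (Fin N → ℝ) → ℝ) (C : Fin κ → (Fin N → ℝ) → ℝ) (k : Fin κ)
    (hk : C k = fun _ => (0:ℝ)) (z : Fin N → ℝ) : nbr lam A B C z = 0 := by
  unfold nbr
  apply Finset.sum_eq_zero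
  intro idx _
  have : ∏ a : Fin κ, pd (C a) (idx a.succ.succ) z = 0 := by
    apply Finset.prod_eq_zero (Finset.mem_univ k)
    rw [hk, pd_zero]
  rw [this]; ring

lemma nbr_dup {N κ : ℕ} (lam : (Fin (κ + 2) → Fin N) → (Fin N → ℝ) → ℝ)
    (hanti : MultiAntisym lam)
    (A B : (Fin N → ℝ) → ℝ) (C : Fin κ → (Fin N → ℝ) → ℝ) (a : Fin κ)
    (hA : C a = A) (z : Fin N → ℝ) : nbr lam A B C z = 0 := by
  set q : Fin (κ + 2) := a.succ.succ with hq
  have hq0 : q ≠ 0 := Fin.succ_ne_zero _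
  have hq1 : q ≠ 1 := by
    intro h
    have h' : (a.succ).succ = (0 : Fin (κ+1)).succ := by
      rw [Fin.succ_zero_eq_one]; exact h
    exact Fin.succ_ne_zero _ (Fin.succ_injective _ h')
  set F : (Fin (κ + 2) → Fin N) → ℝ := fun idx => lam idx z *
    (pd A (idx 0) z * pd B (idx 1) z * ∏ b : Fin κ, pd (C b) (idx b.succ.succ) z) with hF
  have key : ∀ idx, F (idx ∘ Equiv.swap 0 q) = - F idx := by
    intro idx
    have hlam := hanti idx 0 q (Ne.symm hq0) z
    have hprod : ∀ (j0 : Fin N) (f : Fin (κ+2) → Fin N),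
        ∏ b : Fin κ, pd (C b) (f b.succ.succ) z
          = pd (C a) (f q) z * ∏ b ∈ Finset.univ.erase a, pd (C b) (f b.succ.succ) z := by
      intro j0 f
      rw [← Finset.mul_prod_erase Finset.univ _ (Finset.mem_univ a)]
    have heq : ∀ b : Fin κ, b ≠ a →
        (idx ∘ Equiv.swap 0 q) b.succ.succ = idx b.succ.succ := by
      intro b hb
      have h1 : (b.succ.succ : Fin (κ+2)) ≠ 0 := Fin.succ_ne_zero _
      have h2 : (b.succ.succ : Fin (κ+2)) ≠ q := by
        intro h
        exact hb (Fin.succ_injective _ (Fin.succ_injective _ h))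
      simp [Function.comp, Equiv.swap_apply_of_ne_of_ne h1 h2]
    have hat : (idx ∘ Equiv.swap 0 q) q = idx 0 := by
      simp [Function.comp]
    have h0 : (idx ∘ Equiv.swap 0 q) 0 = idx q := by
      simp [Function.comp]
    have h1' : (idx ∘ Equiv.swap 0 q) 1 = idx 1 := by
      have : Equiv.swap (0 : Fin (κ+2)) q 1 = 1 :=
        Equiv.swap_apply_of_ne_of_ne one_ne_zero (Ne.symm hq1)
      simp [Function.comp, this]
    rw [hF]
    simp only [hlam, h0, h1', hprod (idx 0) (idx ∘ Equiv.swap 0 q), hprod (idx 0) idx, hat]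
    rw [Finset.prod_congr rfl (fun b hb => by
      rw [heq b (Finset.ne_of_mem_erase hb)])]
    rw [hA]
    ring
  set e : (Fin (κ + 2) → Fin N) ≃ (Fin (κ + 2) → Fin N) :=
    (Equiv.swap (0 : Fin (κ+2)) q).arrowCongr (Equiv.refl (Fin N)) with hedef
  have he : ∀ idx, e idx = idx ∘ Equiv.swap 0 q := by
    intro idx; funext i
    simp [hedef, Equiv.arrowCongr_apply, Function.comp]
  have hS : nbr lam A B C z = ∑ idx : Fin (κ + 2) → Fin N, F idx := rfl
  have h2 : ∑ idx : Fin (κ + 2) → Fin N, F idx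
      = - ∑ idx : Fin (κ + 2) → Fin N, F idx := by
    conv_lhs => rw [← Equiv.sum_comp e F]
    rw [← Finset.sum_neg_distrib]
    exact Finset.sum_congr rfl (fun idx _ => by rw [he idx, key idx])
  rw [hS]; linarith

/-- if the `(κ+2)`-linear bracket of a smooth totally antisymmetric tensor
field on `ℝ^N` satisfies the generalized fundamental identity (here `κ = κ₀ + 2 ≥ 2`),
then for any fixed smooth functions `C_2,…,C_κ` (given by `Cfix`), the tri-linear bracket
`[A,B,C] := {A,B,C,C_2,…,C_κ}` satisfies the tri-linear fundamental identity. -/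
theorem statement11 (N κ₀ : ℕ)
    (lam : (Fin (κ₀ + 2 + 2) → Fin N) → (Fin N → ℝ) → ℝ)
    (hsmooth : ∀ idx, ContDiff ℝ (⊤ : ℕ∞) (lam idx))
    (hanti : MultiAntisym lam)
    (hFI : GenFundId lam)
    (Cfix : Fin (κ₀ + 1) → (Fin N → ℝ) → ℝ)
    (hCfix : ∀ a, ContDiff ℝ (⊤ : ℕ∞) (Cfix a)) :
    ∀ A B C D E : (Fin N → ℝ) → ℝ,
      ContDiff ℝ (⊤ : ℕ∞) A → ContDiff ℝ (⊤ : ℕ∞) B → ContDiff ℝ (⊤ : ℕ∞) C → ContDiff ℝ (⊤ : ℕ∞) D →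
      ContDiff ℝ (⊤ : ℕ∞) E →
      ∀ z : Fin N → ℝ,
        nbr lam (nbr lam A B (Fin.cons C Cfix)) D (Fin.cons E Cfix) z
          = nbr lam (nbr lam A D (Fin.cons E Cfix)) B (Fin.cons C Cfix) z
            + nbr lam A (nbr lam B D (Fin.cons E Cfix)) (Fin.cons C Cfix) z
            + nbr lam A B (Fin.cons (nbr lam C D (Fin.cons E Cfix)) Cfix) z := by
  intro A B C D E hA hB hC hD hE z
  have hCcons : ∀ a : Fin (κ₀ + 2), ContDiff ℝ (⊤ : ℕ∞) ((Fin.cons C Cfix : Fin (κ₀ + 2) → (Fin N → ℝ) → ℝ) a) := by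
    intro a
    refine Fin.cases ?_ ?_ a
    · simpa using hC
    · intro i; simpa using hCfix i
  have hEcons : ∀ a : Fin (κ₀ + 2), ContDiff ℝ (⊤ : ℕ∞) ((Fin.cons E Cfix : Fin (κ₀ + 2) → (Fin N → ℝ) → ℝ) a) := by
    intro a
    refine Fin.cases ?_ ?_ a
    · simpa using hE
    · intro i; simpa using hCfix i
  rw [hFI A B D (Fin.cons C Cfix) (Fin.cons E Cfix) hA hB hD hCcons hEcons z]
  congr 1
  rw [Fin.sum_univ_succ]
  have htail : ∀ i : Fin (κ₀ + 1),
      nbr lam A B (Function.update (Fin.cons C Cfix : Fin (κ₀ + 2) → (Fin N → ℝ) → ℝ) i.succ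
        (nbr lam ((Fin.cons C Cfix : Fin (κ₀ + 2) → (Fin N → ℝ) → ℝ) i.succ) D (Fin.cons E Cfix))) z = 0 := by
    intro i
    apply nbr_zero_entry lam A B _ i.succ _ z
    rw [Function.update_self]
    funext z'
    rw [Fin.cons_succ]
    exact nbr_dup lam hanti (Cfix i) D (Fin.cons E Cfix) i.succ (Fin.cons_succ _ _ _) z'
  rw [Finset.sum_congr rfl (fun i _ => htail i), Finset.sum_const, smul_zero, add_zero]
  simp only [Fin.cons_zero, Fin.update_cons_zero]
end

section
/- For any n ≥ 3, the canonical n-linear Nambu bracket on ℝ^n, defined for smooth functions A_1,…,A_n : ℝ^n → ℝ by {A_1,…,A_n}(z) = Σ ε_{i_1⋯i_n} (∂A_1/∂z_{i_1})⋯(∂A_n/∂z_{i_n}) (the Jacobian determinant of (A_1,…,A_n)), satisfies the generalized fundamental identity {{A,B,C_1,…,C_{n−2}},D,E_1,…,E_{n−2}} = {{A,D,E_1,…,E_{n−2}},B,C_1,…,C_{n−2}} + {A,{B,D,E_1,…,E_{n−2}},C_1,…,C_{n−2}} + Σ_{k=1}^{n−2} {A,B,C_1,…,C_{k−1},{C_k,D,E_1,…,E_{n−2}},C_{k+1},…,C_{n−2}}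 for all smooth functions A,B,C_k,D,E_k. -/
/-- The `n`-dimensional Levi-Civita tensor `ε_{i_1⋯i_n}`: the determinant of the
corresponding `0`/`1` matrix, i.e. the sign of `σ` when `σ` is a permutation and `0`
otherwise; in particular `ε_{1,2,…,n} = 1` and it is totally antisymmetric. -/
noncomputable def leviCivita {n : ℕ} (σ : Fin n → Fin n) : ℝ :=
  Matrix.det (Matrix.of fun a b => if σ a = b then (1 : ℝ) else 0)

open Finset

namespace NambuAux

variable {m : ℕ}

theorem pd_sum {ι : Type*} (s : Finset ι) (f : ι → (Fin m → ℝ) → ℝ) (i : Fin m) (z : Fin m → ℝ)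
    (h : ∀ j ∈ s, DifferentiableAt ℝ (f j) z) :
    pd (fun y => ∑ j ∈ s, f j y) i z = ∑ j ∈ s, pd (f j) i z := by
  unfold pd
  rw [fderiv_fun_sum h]
  simp

theorem pd_const_mul (c : ℝ) (f : (Fin m → ℝ) → ℝ) (i : Fin m) (z : Fin m → ℝ)
    (h : DifferentiableAt ℝ f z) :
    pd (fun y => c * f y) i z = c * pd f i z := by
  unfold pd
  rw [fderiv_const_mul h]
  simp

theorem pd_prod {ι : Type*} [DecidableEq ι] (s : Finset ι) (f : ι → (Fin m → ℝ) → ℝ) (i : Fin m)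
    (z : Fin m → ℝ) (h : ∀ j ∈ s, DifferentiableAt ℝ (f j) z) :
    pd (fun y => ∏ j ∈ s, f j y) i z
      = ∑ j ∈ s, pd (f j) i z * ∏ q ∈ s.erase j, f q z := by
  have H : HasFDerivAt (∏ j ∈ s, f j ·)
      (∑ j ∈ s, (∏ q ∈ s.erase j, f q z) • fderiv ℝ (f j) z) z :=
    HasFDerivAt.finset_prod (fun j hj => (h j hj).hasFDerivAt)
  unfold pd
  rw [H.fderiv]
  simp [mul_comm]

theorem contDiff_pd {f : (Fin m → ℝ) → ℝ} (hf : ContDiff ℝ (⊤ : ℕ∞) f) (i : Fin m) :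
    ContDiff ℝ (⊤ : ℕ∞) (pd f i) := by
  have h1 : ContDiff ℝ (⊤ : ℕ∞) (fderiv ℝ f) := hf.fderiv_right (by simp)
  have h2 := (ContinuousLinearMap.apply ℝ ℝ (Pi.single (M := fun _ : Fin m => ℝ) i 1)).contDiff.comp h1
  exact h2

theorem diff_pd {f : (Fin m → ℝ) → ℝ} (hf : ContDiff ℝ (⊤ : ℕ∞) f) (i : Fin m) :
    Differentiable ℝ (pd f i) :=
  (contDiff_pd hf i).differentiable (by simp)

theorem pd_pd_eq {f : (Fin m → ℝ) → ℝ} (hf : ContDiff ℝ (⊤ : ℕ∞) f) (i j : Fin m) (z : Fin m → ℝ) :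
    pd (pd f i) j z = fderiv ℝ (fderiv ℝ f) z (Pi.single j 1) (Pi.single i 1) := by
  have h1 : ContDiff ℝ (⊤ : ℕ∞) (fderiv ℝ f) := hf.fderiv_right (by simp)
  have hd : HasFDerivAt (fderiv ℝ f) (fderiv ℝ (fderiv ℝ f) z) z :=
    (h1.differentiable (by simp) z).hasFDerivAt
  have h2 : HasFDerivAt (pd f i)
      ((ContinuousLinearMap.apply ℝ ℝ (Pi.single (M := fun _ : Fin m => ℝ) i 1)).comp
        (fderiv ℝ (fderiv ℝ f) z)) z :=
    ((ContinuousLinearMap.apply ℝ ℝ (Pi.single (M := fun _ : Fin m => ℝ) i 1)).hasFDerivAt).comp z hd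
  rw [show pd (pd f i) j z = fderiv ℝ (pd f i) z (Pi.single j 1) from rfl, h2.fderiv]
  rfl

theorem pd2_symm {f : (Fin m → ℝ) → ℝ} (hf : ContDiff ℝ (⊤ : ℕ∞) f) (i j : Fin m) (z : Fin m → ℝ) :
    pd (pd f i) j z = pd (pd f j) i z := by
  rw [pd_pd_eq hf, pd_pd_eq hf]
  exact hf.contDiffAt.isSymmSndFDerivAt (by rw [minSmoothness_of_isRCLikeNormedField]; exact (WithTop.coe_le_coe.mpr (le_top : (2:ℕ∞) ≤ ⊤) : ((2:ℕ∞) : WithTop ℕ∞) ≤ _)) _ _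

theorem leviCivita_eq_zero {n : ℕ} {σ : Fin n → Fin n} (h : ¬ Function.Injective σ) :
    leviCivita σ = 0 := by
  simp only [Function.Injective, not_forall] at h
  obtain ⟨a, b, hab, hne⟩ := h
  exact Matrix.det_zero_of_row_eq hne (by funext c; simp [hab])

theorem leviCivita_perm {n : ℕ} (σ : Equiv.Perm (Fin n)) :
    leviCivita ⇑σ = ((Equiv.Perm.sign σ : ℤ) : ℝ) := by
  have h : (Matrix.of fun a b => if σ a = b then (1:ℝ) else 0) = σ.permMatrix ℝ := by
    ext a b
    simp [Equiv.Perm.permMatrix, PEquiv.toMatrix, Equiv.toPEquiv, eq_comm]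
  rw [leviCivita, h, Matrix.det_permutation]

theorem leviCivita_comp_swap {n : ℕ} (idx : Fin n → Fin n) {a b : Fin n} (hab : a ≠ b) :
    leviCivita (idx ∘ Equiv.swap a b) = - leviCivita idx := by
  have h : (Matrix.of fun p q => if (idx ∘ Equiv.swap a b) p = q then (1:ℝ) else 0)
      = (Matrix.of fun p q => if idx p = q then (1:ℝ) else 0).submatrix (⇑(Equiv.swap a b)) id := by
    ext p q
    simp [Matrix.submatrix]
  rw [leviCivita, h, Matrix.det_permute, leviCivita]
  simp [Equiv.Perm.sign_swap hab]

theorem sum_leviCivita_mul {n : ℕ} (f : (Fin n → Fin n) → ℝ) :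
    ∑ idx : Fin n → Fin n, leviCivita idx * f idx
      = ∑ σ : Equiv.Perm (Fin n), ((Equiv.Perm.sign σ : ℤ) : ℝ) * f ⇑σ := by
  classical
  have hzero : ∑ idx ∈ Finset.univ.filter (fun idx => ¬ Function.Injective idx),
      leviCivita idx * f idx = 0 :=
    Finset.sum_eq_zero (fun idx hidx => by
      simp only [Finset.mem_filter] at hidx
      rw [leviCivita_eq_zero hidx.2, zero_mul])
  rw [← Finset.sum_filter_add_sum_filter_not Finset.univ (fun idx => Function.Injective idx)
    (fun idx => leviCivita idx * f idx), hzero, add_zero]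
  refine (Finset.sum_bij (fun (σ : Equiv.Perm (Fin n)) _ => ⇑σ) ?_ ?_ ?_ ?_).symm
  · intro σ _
    simp [σ.injective]
  · intro σ1 _ σ2 _ h
    exact Equiv.coe_fn_injective h
  · intro idx hidx
    simp only [Finset.mem_filter] at hidx
    exact ⟨Equiv.ofBijective idx (Finite.injective_iff_bijective.mp hidx.2), Finset.mem_univ _, rfl⟩
  · intro σ _
    rw [leviCivita_perm]

theorem sum_leviCivita_prod {n : ℕ} (N : Matrix (Fin n) (Fin n) ℝ) :
    ∑ idx : Fin n → Fin n, leviCivita idx * ∏ q, N q (idx q) = N.det := by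
  rw [sum_leviCivita_mul (fun idx => ∏ q, N q (idx q)), ← Matrix.det_transpose N,
    Matrix.det_apply]
  refine Finset.sum_congr rfl fun σ _ => ?_
  simp [Matrix.transpose_apply, Units.smul_def, zsmul_eq_mul]

theorem sum_row_mul_det_updateRow {n : ℕ} (M : Matrix (Fin n) (Fin n) ℝ) (w : Fin n → ℝ)
    (m0 : Fin n) :
    ∑ p, M p m0 * (M.updateRow p w).det = w m0 * M.det := by
  have h := congrFun (Matrix.mulVec_cramer (Matrix.transpose M) w) m0
  simp only [Matrix.mulVec, dotProduct, Matrix.cramer_apply, Matrix.transpose_apply,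
    Matrix.updateCol_transpose, Matrix.det_transpose, Pi.smul_apply, smul_eq_mul] at h
  rw [h, mul_comm]

def swapArg {n : ℕ} (a b : Fin n) : (Fin n → Fin n) ≃ (Fin n → Fin n) :=
  ⟨fun j => j ∘ Equiv.swap a b, fun j => j ∘ Equiv.swap a b,
    fun j => by funext x; simp, fun j => by funext x; simp⟩

theorem sum_eps_swap_eq_zero {n : ℕ} {a b : Fin n} (hab : a ≠ b) (f : (Fin n → Fin n) → ℝ)
    (hf : ∀ jdx, f (jdx ∘ Equiv.swap a b) = f jdx) :
    ∑ jdx : Fin n → Fin n, leviCivita jdx * f jdx = 0 := by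
  have key : ∀ jdx : Fin n → Fin n,
      (fun j => leviCivita j * f j) (swapArg a b jdx) = -(leviCivita jdx * f jdx) := by
    intro jdx
    have he : swapArg a b jdx = jdx ∘ ⇑(Equiv.swap a b) := rfl
    simp only [he]
    rw [leviCivita_comp_swap _ hab, hf]
    ring
  have h2 := Equiv.sum_comp (swapArg a b) (fun j => leviCivita j * f j)
  rw [Finset.sum_congr rfl (fun jdx _ => key jdx)] at h2
  rw [Finset.sum_neg_distrib] at h2
  linarith
noncomputable def Br {m : ℕ} (G : Fin m → (Fin m → ℝ) → ℝ) (z : Fin m → ℝ) : ℝ :=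
  ∑ idx : Fin m → Fin m, leviCivita idx * ∏ p, pd (G p) (idx p) z

theorem erase_erase_comm {α : Type*} [DecidableEq α] (s : Finset α) (a b : α) :
    (s.erase a).erase b = (s.erase b).erase a := by
  ext x
  simp only [Finset.mem_erase]
  tauto

theorem contDiff_Br {m : ℕ} {G : Fin m → (Fin m → ℝ) → ℝ}
    (hG : ∀ p, ContDiff ℝ (⊤ : ℕ∞) (G p)) : ContDiff ℝ (⊤ : ℕ∞) (Br G) := by
  have h : Br G = fun z => ∑ idx ∈ (Finset.univ : Finset (Fin m → Fin m)),
      leviCivita idx * ∏ p, pd (G p) (idx p) z := rfl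
  rw [h]
  exact ContDiff.sum fun idx _ =>
    contDiff_const.mul (contDiff_prod fun p _ => contDiff_pd (hG p) (idx p))

theorem pd_Br {m : ℕ} {G : Fin m → (Fin m → ℝ) → ℝ} (hG : ∀ p, ContDiff ℝ (⊤ : ℕ∞) (G p))
    (i : Fin m) (z : Fin m → ℝ) :
    pd (Br G) i z = ∑ idx : Fin m → Fin m, leviCivita idx *
      ∑ p, pd (pd (G p) (idx p)) i z * ∏ q ∈ Finset.univ.erase p, pd (G q) (idx q) z := by
  have hprod : ∀ idx : Fin m → Fin m,
      Differentiable ℝ (fun y => ∏ p, pd (G p) (idx p) y) :=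
    fun idx => (contDiff_prod fun p _ => contDiff_pd (hG p) (idx p)).differentiable (by simp)
  set f : (Fin m → Fin m) → (Fin m → ℝ) → ℝ :=
    fun idx y => leviCivita idx * ∏ p, pd (G p) (idx p) y with hf
  have hdiff : ∀ idx ∈ (Finset.univ : Finset (Fin m → Fin m)), DifferentiableAt ℝ (f idx) z := by
    intro idx _
    rw [hf]
    exact ((contDiff_const.mul (contDiff_prod fun p _ =>
      contDiff_pd (hG p) (idx p))).differentiable (by simp)).differentiableAt
  have h0 : Br G = fun y => ∑ idx ∈ (Finset.univ : Finset (Fin m → Fin m)), f idx y := by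
    rw [hf]; exact rfl
  rw [h0, pd_sum Finset.univ f i z hdiff]
  refine Finset.sum_congr rfl fun idx _ => ?_
  have h1 : f idx = fun y => leviCivita idx * ∏ p, pd (G p) (idx p) y := by rw [hf]
  rw [h1, pd_const_mul _ _ i z ((hprod idx) z)]
  congr 1
  exact pd_prod Finset.univ _ i z fun p _ => (diff_pd (hG p) (idx p)) z

theorem main {m : ℕ} [NeZero m] (G H : Fin m → (Fin m → ℝ) → ℝ)
    (hG : ∀ p, ContDiff ℝ (⊤ : ℕ∞) (G p)) (hH : ∀ p, ContDiff ℝ (⊤ : ℕ∞) (H p))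
    (z : Fin m → ℝ) :
    Br (Function.update H 0 (Br G)) z
      = ∑ p : Fin m, Br (Function.update G p (Br (Function.update H 0 (G p)))) z := by
  classical
  set M : Matrix (Fin m) (Fin m) ℝ := Matrix.of (fun q i => pd (G q) i z) with hM
  -- Step 1: expand the left-hand side
  have hL : Br (Function.update H 0 (Br G)) z
      = ∑ idx : Fin m → Fin m, ∑ jdx : Fin m → Fin m, ∑ p : Fin m,
          leviCivita idx * leviCivita jdx * pd (pd (G p) (jdx p)) (idx 0) z *
            (∏ q ∈ Finset.univ.erase p, pd (G q) (jdx q) z) *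
            (∏ s ∈ Finset.univ.erase 0, pd (H s) (idx s) z) := by
    show (∑ idx : Fin m → Fin m, leviCivita idx *
        ∏ p, pd (Function.update H 0 (Br G) p) (idx p) z) = _
    refine Finset.sum_congr rfl fun idx _ => ?_
    rw [← Finset.mul_prod_erase Finset.univ _ (Finset.mem_univ (0 : Fin m))]
    rw [Function.update_self]
    have e0 : (∏ s ∈ Finset.univ.erase (0 : Fin m),
        pd (Function.update H 0 (Br G) s) (idx s) z)
        = ∏ s ∈ Finset.univ.erase (0 : Fin m), pd (H s) (idx s) z :=
      Finset.prod_congr rfl fun s hs => by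
        rw [Function.update_of_ne (Finset.ne_of_mem_erase hs)]
    rw [e0, pd_Br hG (idx 0) z]
    simp only [Finset.sum_mul, Finset.mul_sum]
    refine Finset.sum_congr rfl fun jdx _ => Finset.sum_congr rfl fun p _ => ?_
    ring
  -- Step 2: expand each term on the right-hand side
  have hupd : ∀ p r : Fin m, ContDiff ℝ (⊤ : ℕ∞) (Function.update H 0 (G p) r) := by
    intro p r
    rcases eq_or_ne r 0 with h | h
    · rw [h, Function.update_self]; exact hG p
    · rw [Function.update_of_ne h]; exact hH r
  have hR : ∀ p : Fin m, Br (Function.update G p (Br (Function.update H 0 (G p)))) z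
      = (∑ idx : Fin m → Fin m, ∑ jdx : Fin m → Fin m,
          leviCivita idx * leviCivita jdx * pd (pd (G p) (jdx 0)) (idx p) z *
            (∏ s ∈ Finset.univ.erase 0, pd (H s) (jdx s) z) *
            (∏ q ∈ Finset.univ.erase p, pd (G q) (idx q) z))
        + ∑ jdx : Fin m → Fin m, ∑ r ∈ Finset.univ.erase 0, ∑ idx : Fin m → Fin m,
            leviCivita idx * leviCivita jdx * pd (pd (H r) (jdx r)) (idx p) z *
              pd (G p) (jdx 0) z *
              (∏ s ∈ (Finset.univ.erase 0).erase r, pd (H s) (jdx s) z) *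
              (∏ q ∈ Finset.univ.erase p, pd (G q) (idx q) z) := by
    intro p
    have hsplit : ∀ (i : Fin m) (jdx : Fin m → Fin m),
        (∑ r : Fin m, pd (pd (Function.update H 0 (G p) r) (jdx r)) i z *
          ∏ s ∈ Finset.univ.erase r, pd (Function.update H 0 (G p) s) (jdx s) z)
        = (pd (pd (G p) (jdx 0)) i z *
            ∏ s ∈ Finset.univ.erase 0, pd (H s) (jdx s) z)
          + ∑ r ∈ Finset.univ.erase 0, pd (pd (H r) (jdx r)) i z *
              (pd (G p) (jdx 0) z *
                ∏ s ∈ (Finset.univ.erase 0).erase r, pd (H s) (jdx s) z) := by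
      intro i jdx
      rw [← Finset.add_sum_erase Finset.univ _ (Finset.mem_univ (0 : Fin m))]
      congr 1
      · rw [Function.update_self]
        congr 1
        exact Finset.prod_congr rfl fun s hs => by
          rw [Function.update_of_ne (Finset.ne_of_mem_erase hs)]
      · refine Finset.sum_congr rfl fun r hr => ?_
        have hr0 : r ≠ 0 := Finset.ne_of_mem_erase hr
        rw [Function.update_of_ne hr0]
        congr 1
        rw [← Finset.mul_prod_erase (Finset.univ.erase r) _
          (Finset.mem_erase.mpr ⟨Ne.symm hr0, Finset.mem_univ (0 : Fin m)⟩)]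
        rw [Function.update_self, erase_erase_comm]
        congr 1
        refine Finset.prod_congr rfl fun s hs => ?_
        have hs0 : s ≠ 0 := Finset.ne_of_mem_erase (Finset.mem_of_mem_erase hs)
        rw [Function.update_of_ne hs0]
    show (∑ idx : Fin m → Fin m, leviCivita idx *
        ∏ q, pd (Function.update G p (Br (Function.update H 0 (G p))) q) (idx q) z) = _
    have step1 : ∀ idx : Fin m → Fin m, leviCivita idx *
        ∏ q, pd (Function.update G p (Br (Function.update H 0 (G p))) q) (idx q) z
        = (∑ jdx : Fin m → Fin m,
            leviCivita idx * leviCivita jdx * pd (pd (G p) (jdx 0)) (idx p) z *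
              (∏ s ∈ Finset.univ.erase 0, pd (H s) (jdx s) z) *
              (∏ q ∈ Finset.univ.erase p, pd (G q) (idx q) z))
          + ∑ jdx : Fin m → Fin m, ∑ r ∈ Finset.univ.erase 0,
              leviCivita idx * leviCivita jdx * pd (pd (H r) (jdx r)) (idx p) z *
                pd (G p) (jdx 0) z *
                (∏ s ∈ (Finset.univ.erase 0).erase r, pd (H s) (jdx s) z) *
                (∏ q ∈ Finset.univ.erase p, pd (G q) (idx q) z) := by
      intro idx
      rw [← Finset.mul_prod_erase Finset.univ _ (Finset.mem_univ p), Function.update_self]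
      have e1 : (∏ q ∈ Finset.univ.erase p,
          pd (Function.update G p (Br (Function.update H 0 (G p))) q) (idx q) z)
          = ∏ q ∈ Finset.univ.erase p, pd (G q) (idx q) z :=
        Finset.prod_congr rfl fun q hq => by
          rw [Function.update_of_ne (Finset.ne_of_mem_erase hq)]
      rw [e1, pd_Br (hupd p) (idx p) z]
      have e2 : (∑ jdx : Fin m → Fin m, leviCivita jdx *
          ∑ r, pd (pd (Function.update H 0 (G p) r) (jdx r)) (idx p) z *
            ∏ s ∈ Finset.univ.erase r, pd (Function.update H 0 (G p) s) (jdx s) z)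
          = ∑ jdx : Fin m → Fin m, leviCivita jdx *
              ((pd (pd (G p) (jdx 0)) (idx p) z *
                ∏ s ∈ Finset.univ.erase 0, pd (H s) (jdx s) z)
              + ∑ r ∈ Finset.univ.erase 0, pd (pd (H r) (jdx r)) (idx p) z *
                  (pd (G p) (jdx 0) z *
                    ∏ s ∈ (Finset.univ.erase 0).erase r, pd (H s) (jdx s) z)) :=
        Finset.sum_congr rfl fun jdx _ => by rw [hsplit (idx p) jdx]
      rw [e2]
      simp only [Finset.sum_mul, Finset.mul_sum, mul_add, add_mul, Finset.sum_add_distrib]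
      congr 1
      · exact Finset.sum_congr rfl fun jdx _ => by ring
      · exact Finset.sum_congr rfl fun jdx _ => Finset.sum_congr rfl fun r _ => by ring
    rw [Finset.sum_congr rfl fun idx _ => step1 idx, Finset.sum_add_distrib]
    congr 1
    rw [Finset.sum_comm]
    exact Finset.sum_congr rfl fun jdx _ => Finset.sum_comm
  -- Step 3: match the G-second-derivative terms
  have sum_comm3 : ∀ (f : (Fin m → Fin m) → (Fin m → Fin m) → Fin m → ℝ),
      (∑ a : Fin m → Fin m, ∑ b : Fin m → Fin m, ∑ c : Fin m, f a b c)
        = ∑ c : Fin m, ∑ a : Fin m → Fin m, ∑ b : Fin m → Fin m, f a b c := by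
    intro f
    have h1 : ∀ a : Fin m → Fin m, (∑ b : Fin m → Fin m, ∑ c : Fin m, f a b c)
        = ∑ c : Fin m, ∑ b : Fin m → Fin m, f a b c := fun a => Finset.sum_comm
    rw [Finset.sum_congr rfl fun a _ => h1 a]
    exact Finset.sum_comm
  have sum_comm4 : ∀ (s : Finset (Fin m))
      (f : Fin m → (Fin m → Fin m) → Fin m → (Fin m → Fin m) → ℝ),
      (∑ a : Fin m, ∑ b : Fin m → Fin m, ∑ c ∈ s, ∑ d : Fin m → Fin m, f a b c d)
        = ∑ c ∈ s, ∑ b : Fin m → Fin m, ∑ a : Fin m, ∑ d : Fin m → Fin m, f a b c d := by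
    intro s f
    have h1 : ∀ b : Fin m → Fin m, (∑ a : Fin m, ∑ c ∈ s, ∑ d : Fin m → Fin m, f a b c d)
        = ∑ c ∈ s, ∑ a : Fin m, ∑ d : Fin m → Fin m, f a b c d := fun b => Finset.sum_comm
    rw [Finset.sum_comm]
    rw [Finset.sum_congr rfl fun b _ => h1 b]
    exact Finset.sum_comm
  have claim1 : (∑ idx : Fin m → Fin m, ∑ jdx : Fin m → Fin m, ∑ p : Fin m,
        leviCivita idx * leviCivita jdx * pd (pd (G p) (jdx p)) (idx 0) z *
          (∏ q ∈ Finset.univ.erase p, pd (G q) (jdx q) z) *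
          (∏ s ∈ Finset.univ.erase 0, pd (H s) (idx s) z))
      = ∑ p : Fin m, ∑ idx : Fin m → Fin m, ∑ jdx : Fin m → Fin m,
          leviCivita idx * leviCivita jdx * pd (pd (G p) (jdx 0)) (idx p) z *
            (∏ s ∈ Finset.univ.erase 0, pd (H s) (jdx s) z) *
            (∏ q ∈ Finset.univ.erase p, pd (G q) (idx q) z) := by
    rw [sum_comm3]
    refine Finset.sum_congr rfl fun p _ => ?_
    conv_lhs => rw [Finset.sum_comm]
    refine Finset.sum_congr rfl fun a _ => Finset.sum_congr rfl fun b _ => ?_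
    rw [pd2_symm (hG p) (a p) (b 0) z]
    ring
  -- Step 4: the H-second-derivative terms cancel
  have hdet : ∀ (p : Fin m) (w : Fin m → ℝ),
      (∑ idx : Fin m → Fin m, leviCivita idx *
        (w (idx p) * ∏ q ∈ Finset.univ.erase p, pd (G q) (idx q) z))
        = (M.updateRow p w).det := by
    intro p w
    rw [← sum_leviCivita_prod (M.updateRow p w)]
    refine Finset.sum_congr rfl fun idx _ => ?_
    congr 1
    rw [← Finset.mul_prod_erase Finset.univ _ (Finset.mem_univ p), Matrix.updateRow_self]
    congr 1
    refine Finset.prod_congr rfl fun q hq => ?_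
    rw [Matrix.updateRow_ne (Finset.ne_of_mem_erase hq)]
    simp [hM]
  have hcramer : ∀ (jdx : Fin m → Fin m) (r : Fin m),
      (∑ p : Fin m, pd (G p) (jdx 0) z *
        (M.updateRow p (fun i => pd (pd (H r) (jdx r)) i z)).det)
        = pd (pd (H r) (jdx r)) (jdx 0) z * M.det := by
    intro jdx r
    have h := sum_row_mul_det_updateRow M (fun i => pd (pd (H r) (jdx r)) i z) (jdx 0)
    rw [← h]
    refine Finset.sum_congr rfl fun p _ => ?_
    rfl
  have hswap : ∀ r ∈ Finset.univ.erase (0 : Fin m),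
      (∑ jdx : Fin m → Fin m, leviCivita jdx *
        ((∏ s ∈ (Finset.univ.erase 0).erase r, pd (H s) (jdx s) z) *
          (pd (pd (H r) (jdx r)) (jdx 0) z * M.det))) = 0 := by
    intro r hr
    have hr0 : (0 : Fin m) ≠ r := (Finset.ne_of_mem_erase hr).symm
    refine sum_eps_swap_eq_zero hr0 _ fun jdx => ?_
    have hswr : (jdx ∘ Equiv.swap (0 : Fin m) r) r = jdx 0 := by
      simp [Equiv.swap_apply_right]
    have hsw0 : (jdx ∘ Equiv.swap (0 : Fin m) r) 0 = jdx r := by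
      simp [Equiv.swap_apply_left]
    rw [hswr, hsw0]
    rw [Finset.prod_congr rfl (fun s hs => by
      have hsr : s ≠ r := (Finset.mem_erase.mp hs).1
      have hs0 : s ≠ 0 := (Finset.mem_erase.mp (Finset.mem_of_mem_erase hs)).1
      show pd (H s) ((jdx ∘ Equiv.swap (0:Fin m) r) s) z = pd (H s) (jdx s) z
      rw [show (jdx ∘ Equiv.swap (0:Fin m) r) s = jdx s by
        simp [Equiv.swap_apply_of_ne_of_ne hs0 hsr]])]
    rw [pd2_symm (hH r) (jdx 0) (jdx r) z]
  have claim2 : (∑ p : Fin m, ∑ jdx : Fin m → Fin m, ∑ r ∈ Finset.univ.erase 0,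
      ∑ idx : Fin m → Fin m,
        leviCivita idx * leviCivita jdx * pd (pd (H r) (jdx r)) (idx p) z *
          pd (G p) (jdx 0) z *
          (∏ s ∈ (Finset.univ.erase 0).erase r, pd (H s) (jdx s) z) *
          (∏ q ∈ Finset.univ.erase p, pd (G q) (idx q) z)) = 0 := by
    rw [sum_comm4]
    refine Finset.sum_eq_zero fun r hr => ?_
    have hcontract : ∀ jdx : Fin m → Fin m,
        (∑ p : Fin m, ∑ idx : Fin m → Fin m,
          leviCivita idx * leviCivita jdx * pd (pd (H r) (jdx r)) (idx p) z *
            pd (G p) (jdx 0) z *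
            (∏ s ∈ (Finset.univ.erase 0).erase r, pd (H s) (jdx s) z) *
            (∏ q ∈ Finset.univ.erase p, pd (G q) (idx q) z))
        = leviCivita jdx *
            ((∏ s ∈ (Finset.univ.erase 0).erase r, pd (H s) (jdx s) z) *
              (pd (pd (H r) (jdx r)) (jdx 0) z * M.det)) := by
      intro jdx
      rw [← hcramer jdx r]
      rw [Finset.mul_sum, Finset.mul_sum]
      refine Finset.sum_congr rfl fun p _ => ?_
      rw [← hdet p (fun i => pd (pd (H r) (jdx r)) i z)]
      rw [Finset.mul_sum, Finset.mul_sum, Finset.mul_sum]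
      refine Finset.sum_congr rfl fun idx _ => ?_
      ring
    rw [Finset.sum_congr rfl fun jdx _ => hcontract jdx]
    exact hswap r hr
  -- Assemble
  rw [hL, Finset.sum_congr rfl fun p (_ : p ∈ Finset.univ) => hR p, Finset.sum_add_distrib,
    claim2, add_zero]
  exact claim1
theorem nbr_eq_Br {κ : ℕ} (A B : (Fin (κ+2) → ℝ) → ℝ) (C : Fin κ → (Fin (κ+2) → ℝ) → ℝ) :
    nbr (fun idx _ => leviCivita idx) A B C = Br (Fin.cons A (Fin.cons B C)) := by
  funext z
  show (∑ idx : Fin (κ+2) → Fin (κ+2), leviCivita idx *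
      (pd A (idx 0) z * pd B (idx 1) z * ∏ a : Fin κ, pd (C a) (idx a.succ.succ) z)) = _
  refine Finset.sum_congr rfl fun idx _ => ?_
  congr 1
  rw [Fin.prod_univ_succ, Fin.prod_univ_succ]
  simp only [Fin.cons_succ, Fin.cons_zero]
  simp only [Fin.succ_zero_eq_one]
  ring

end NambuAux

/-- for any `n = κ + 2 ≥ 3`, the canonical `n`-linear Nambu bracket on
`ℝ^n` given by the Levi-Civita tensor (the Jacobian determinant of its `n` arguments)
satisfies the generalized fundamental identity. -/
theorem statement13 (κ : ℕ) (hκ : 1 ≤ κ) :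
    GenFundId (N := κ + 2) (κ := κ) (fun idx _ => leviCivita idx) := by
  intro A B D C E hA hB hD hC hE z
  classical
  have hA' : ContDiff ℝ (⊤ : ℕ∞) A := hA.of_le (by simp)
  have hB' : ContDiff ℝ (⊤ : ℕ∞) B := hB.of_le (by simp)
  have hD' : ContDiff ℝ (⊤ : ℕ∞) D := hD.of_le (by simp)
  have hC' : ∀ a, ContDiff ℝ (⊤ : ℕ∞) (C a) := fun a => (hC a).of_le (by simp)
  have hE' : ∀ a, ContDiff ℝ (⊤ : ℕ∞) (E a) := fun a => (hE a).of_le (by simp)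
  have hG : ∀ p : Fin (κ+2), ContDiff ℝ (⊤ : ℕ∞)
      ((Fin.cons A (Fin.cons B C) : Fin (κ+2) → (Fin (κ+2) → ℝ) → ℝ) p) := by
    intro p
    refine Fin.cases (motive := fun p => ContDiff ℝ (⊤ : ℕ∞)
        ((Fin.cons A (Fin.cons B C) : Fin (κ+2) → (Fin (κ+2) → ℝ) → ℝ) p))
      ?_ (fun q => ?_) p
    · simp only [Fin.cons_zero]; exact hA'
    · simp only [Fin.cons_succ]
      refine Fin.cases (motive := fun q => ContDiff ℝ (⊤ : ℕ∞)
          ((Fin.cons B C : Fin (κ+1) → (Fin (κ+2) → ℝ) → ℝ) q))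
        ?_ (fun a => ?_) q
      · simp only [Fin.cons_zero]; exact hB'
      · simp only [Fin.cons_succ]; exact hC' a
  have hH : ∀ p : Fin (κ+2), ContDiff ℝ (⊤ : ℕ∞)
      ((Fin.cons A (Fin.cons D E) : Fin (κ+2) → (Fin (κ+2) → ℝ) → ℝ) p) := by
    intro p
    refine Fin.cases (motive := fun p => ContDiff ℝ (⊤ : ℕ∞)
        ((Fin.cons A (Fin.cons D E) : Fin (κ+2) → (Fin (κ+2) → ℝ) → ℝ) p))
      ?_ (fun q => ?_) p
    · simp only [Fin.cons_zero]; exact hA'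
    · simp only [Fin.cons_succ]
      refine Fin.cases (motive := fun q => ContDiff ℝ (⊤ : ℕ∞)
          ((Fin.cons D E : Fin (κ+1) → (Fin (κ+2) → ℝ) → ℝ) q))
        ?_ (fun a => ?_) q
      · simp only [Fin.cons_zero]; exact hD'
      · simp only [Fin.cons_succ]; exact hE' a
  have key := NambuAux.main (Fin.cons A (Fin.cons B C)) (Fin.cons A (Fin.cons D E)) hG hH z
  rw [Fin.sum_univ_succ, Fin.sum_univ_succ] at key
  simp only [Fin.update_cons_zero, Fin.cons_zero, Fin.cons_succ, ← Fin.cons_update] at key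
  have hterm : ∀ k : Fin κ,
      nbr (fun idx _ => leviCivita idx) A B
        (Function.update C k (nbr (fun idx _ => leviCivita idx) (C k) D E)) z
      = NambuAux.Br (Fin.cons A (Fin.cons B (Function.update C k
          (NambuAux.Br (Fin.cons (C k) (Fin.cons D E)))))) z := by
    intro k
    rw [NambuAux.nbr_eq_Br (C k) D E, NambuAux.nbr_eq_Br A B _]
  rw [NambuAux.nbr_eq_Br A B C, NambuAux.nbr_eq_Br A D E, NambuAux.nbr_eq_Br B D E,
    NambuAux.nbr_eq_Br (NambuAux.Br (Fin.cons A (Fin.cons B C))) D E,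
    NambuAux.nbr_eq_Br (NambuAux.Br (Fin.cons A (Fin.cons D E))) B C,
    NambuAux.nbr_eq_Br A (NambuAux.Br (Fin.cons B (Fin.cons D E))) C,
    Finset.sum_congr rfl fun k _ => hterm k]
  linarith [key]
end
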